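/- arXiv:math/0605208 — 11 statements merged into one kernel-verified Lean document; each statement's English description precedes it below -/
import Mathlib

section
/- Let 0 < q < 1, b > 0, n a positive integer, and a = b q^n. If f, g : [a,b] → ℝ are both q-increasing (f(qx) ≤ f(x) whenever x, qx ∈ [a,b]) or both q-decreasing, then G_q(fg;a,b) ≥ (1/(b−a))·G_q(f;a,b)·G_q(g;a,b), where G_q(f;a,b) = b(1−q)∑_{k=0}^{n−1} f(b q^k) q^k. -/
/-!
On the grid `b q^k` the restricted q-integral is a sum with weights `q^k`, whose total is
`(b - a) / (b (1 - q))`. A q-increasing (q-decreasing) function is antitone (monotone) along the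
grid index `k`, so `k ↦ f (b q^k)` and `k ↦ g (b q^k)` monovary and the weighted Chebyshev sum
inequality applies.
-/

open Set

section Chebyshev

variable {ι R : Type*} [CommRing R] [LinearOrder R] [IsStrictOrderedRing R]

theorem sum_mul_sum_le_sum_mul_sum_of_monovaryOn {s : Finset ι} {w F G : ι → R}
    (hw : ∀ i ∈ s, 0 ≤ w i) (hFG : MonovaryOn F G s) :
    (∑ i ∈ s, F i * w i) * (∑ i ∈ s, G i * w i) ≤
      (∑ i ∈ s, w i) * ∑ i ∈ s, F i * G i * w i := by
  have hdouble : 2 * ((∑ i ∈ s, w i) * (∑ i ∈ s, F i * G i * w i) -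
      (∑ i ∈ s, F i * w i) * (∑ i ∈ s, G i * w i)) =
      ∑ i ∈ s, ∑ j ∈ s, w i * w j * ((F j - F i) * (G j - G i)) := by
    rw [Finset.sum_mul_sum, Finset.sum_mul_sum]
    simp only [← Finset.sum_sub_distrib]
    rw [two_mul]
    nth_rewrite 2 [Finset.sum_comm]
    simp only [← Finset.sum_add_distrib]
    exact Finset.sum_congr rfl fun i _ => Finset.sum_congr rfl fun j _ => by ring
  have hnonneg : 0 ≤ ∑ i ∈ s, ∑ j ∈ s, w i * w j * ((F j - F i) * (G j - G i)) :=
    Finset.sum_nonneg fun i hi => Finset.sum_nonneg fun j hj =>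
      mul_nonneg (mul_nonneg (hw i hi) (hw j hj)) (hFG.sub_mul_sub_nonneg hi hj)
  linarith

variable {𝕜 : Type*} [Field 𝕜] [LinearOrder 𝕜] [IsStrictOrderedRing 𝕜]

theorem sum_mul_sum_div_sum_le_of_monovaryOn {s : Finset ι} {w F G : ι → 𝕜}
    (hw : ∀ i ∈ s, 0 ≤ w i) (hFG : MonovaryOn F G s) :
    (∑ i ∈ s, F i * w i) * (∑ i ∈ s, G i * w i) / ∑ i ∈ s, w i ≤
      ∑ i ∈ s, F i * G i * w i := by
  rcases (Finset.sum_nonneg hw).eq_or_lt with hzero | hpos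
  · have hw0 : ∀ i ∈ s, w i = 0 := (Finset.sum_eq_zero_iff_of_nonneg hw).mp hzero.symm
    rw [← hzero, div_zero, Finset.sum_eq_zero fun i hi => by rw [hw0 i hi, mul_zero]]
  · rw [div_le_iff₀' hpos]
    exact sum_mul_sum_le_sum_mul_sum_of_monovaryOn hw hFG

end Chebyshev

section QMonotone

variable {α β : Type*} [Mul α] [Preorder β]

def QIncreasingOn (q : α) (f : α → β) (s : Set α) : Prop :=
  ∀ x ∈ s, q * x ∈ s → f (q * x) ≤ f x

def QDecreasingOn (q : α) (f : α → β) (s : Set α) : Prop :=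
  ∀ x ∈ s, q * x ∈ s → f x ≤ f (q * x)

end QMonotone

section GeometricGrid

variable {𝕜 β : Type*} [Field 𝕜] [LinearOrder 𝕜] [IsStrictOrderedRing 𝕜] [Preorder β]
  {q b : 𝕜} {n : ℕ} {f : 𝕜 → β}

theorem mul_pow_mem_Icc (hb : 0 ≤ b) (hq0 : 0 ≤ q) (hq1 : q ≤ 1) {k : ℕ} (hk : k ≤ n) :
    b * q ^ k ∈ Icc (b * q ^ n) b :=
  ⟨mul_le_mul_of_nonneg_left (pow_le_pow_of_le_one hq0 hq1 hk) hb,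
    mul_le_of_le_one_right hb (pow_le_one₀ hq0 hq1)⟩

theorem QIncreasingOn.antitoneOn_mul_pow (hb : 0 ≤ b) (hq0 : 0 ≤ q) (hq1 : q ≤ 1)
    (hf : QIncreasingOn q f (Icc (b * q ^ n) b)) :
    AntitoneOn (fun k => f (b * q ^ k)) (Iic n) := by
  refine antitoneOn_of_succ_le ordConnected_Iic fun k _ hk hk1 => ?_
  have hstep : q * (b * q ^ k) = b * q ^ Order.succ k := by
    rw [Order.succ_eq_add_one, pow_succ]; ring
  have := hf _ (mul_pow_mem_Icc hb hq0 hq1 hk) (hstep ▸ mul_pow_mem_Icc hb hq0 hq1 hk1)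
  rwa [hstep] at this

theorem QDecreasingOn.monotoneOn_mul_pow (hb : 0 ≤ b) (hq0 : 0 ≤ q) (hq1 : q ≤ 1)
    (hf : QDecreasingOn q f (Icc (b * q ^ n) b)) :
    MonotoneOn (fun k => f (b * q ^ k)) (Iic n) :=
  QIncreasingOn.antitoneOn_mul_pow (β := βᵒᵈ) hb hq0 hq1 hf

end GeometricGrid

theorem q_chebyshev_Gq_general (q b : ℝ) (n : ℕ) (f g : ℝ → ℝ)
    (hq0 : 0 < q) (hq1 : q < 1) (hb : 0 < b) (a : ℝ) (ha : a = b * q ^ n)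
    (hmono :
      ((∀ x, x ∈ Icc a b → q * x ∈ Icc a b → f (q * x) ≤ f x) ∧
        (∀ x, x ∈ Icc a b → q * x ∈ Icc a b → g (q * x) ≤ g x)) ∨
      ((∀ x, x ∈ Icc a b → q * x ∈ Icc a b → f x ≤ f (q * x)) ∧
        (∀ x, x ∈ Icc a b → q * x ∈ Icc a b → g x ≤ g (q * x)))) :
    b * (1 - q) * ∑ k ∈ Finset.range n, f (b * q ^ k) * g (b * q ^ k) * q ^ k ≥
      (1 / (b - a)) * (b * (1 - q) * ∑ k ∈ Finset.range n, f (b * q ^ k) * q ^ k) *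
        (b * (1 - q) * ∑ k ∈ Finset.range n, g (b * q ^ k) * q ^ k) := by
  subst ha
  have hrange : ((Finset.range n : Finset ℕ) : Set ℕ) ⊆ Iic n := by
    rw [Finset.coe_range]; exact Iio_subset_Iic_self
  have hmv : MonovaryOn (fun k => f (b * q ^ k)) (fun k => g (b * q ^ k)) (Finset.range n) := by
    rcases hmono with ⟨hf, hg⟩ | ⟨hf, hg⟩
    · exact (QIncreasingOn.antitoneOn_mul_pow hb.le hq0.le hq1.le hf).monovaryOn
        (QIncreasingOn.antitoneOn_mul_pow hb.le hq0.le hq1.le hg) |>.subset hrange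
    · exact (QDecreasingOn.monotoneOn_mul_pow hb.le hq0.le hq1.le hf).monovaryOn
        (QDecreasingOn.monotoneOn_mul_pow hb.le hq0.le hq1.le hg) |>.subset hrange
  have hcheb := sum_mul_sum_div_sum_le_of_monovaryOn (fun k _ => pow_nonneg hq0.le k) hmv
  have hlength : b - b * q ^ n = b * (1 - q) * ∑ k ∈ Finset.range n, q ^ k := by
    rw [mul_assoc, mul_neg_geom_sum]; ring
  have hc : 0 < b * (1 - q) := mul_pos hb (sub_pos.mpr hq1)
  rw [hlength, ge_iff_le]
  calc _ = b * (1 - q) * ((∑ k ∈ Finset.range n, f (b * q ^ k) * q ^ k) *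
        (∑ k ∈ Finset.range n, g (b * q ^ k) * q ^ k) / ∑ k ∈ Finset.range n, q ^ k) := by
        field_simp
    _ ≤ _ := by gcongr

/-- q-Chebyshev inequality for the restricted q-integral
`G_q(f;a,b) = b(1−q)∑_{k<n} f(b q^k) q^k` with `a = b q^n`. -/
theorem q_chebyshev_Gq (q b : ℝ) (n : ℕ) (f g : ℝ → ℝ)
    (hq0 : 0 < q) (hq1 : q < 1) (hb : 0 < b) (hn : 0 < n) (a : ℝ) (ha : a = b * q ^ n)
    (hmono :
      ((∀ x, x ∈ Icc a b → q * x ∈ Icc a b → f (q * x) ≤ f x) ∧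
        (∀ x, x ∈ Icc a b → q * x ∈ Icc a b → g (q * x) ≤ g x)) ∨
      ((∀ x, x ∈ Icc a b → q * x ∈ Icc a b → f x ≤ f (q * x)) ∧
        (∀ x, x ∈ Icc a b → q * x ∈ Icc a b → g x ≤ g (q * x)))) :
    b * (1 - q) * ∑ k ∈ Finset.range n, f (b * q ^ k) * g (b * q ^ k) * q ^ k ≥
      (1 / (b - a)) * (b * (1 - q) * ∑ k ∈ Finset.range n, f (b * q ^ k) * q ^ k) *
        (b * (1 - q) * ∑ k ∈ Finset.range n, g (b * q ^ k) * q ^ k) :=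
  q_chebyshev_Gq_general q b n f g hq0 hq1 hb a ha hmono
end

section
/- Let 0 < q < 1 and b > 0. If f, g : [0,b] → ℝ are both q-increasing or both q-decreasing and q-integrable on [0,b], then I_q(fg;0,b) ≥ (1/b)·I_q(f;0,b)·I_q(g;0,b). -/
open Set Filter

/-! The nodes `b q^n` of the Jackson integral decrease in `n`, so two functions that are both
`q`-increasing (or both `q`-decreasing) give similarly ordered sequences `f (b q^n)`, `g (b q^n)`.
The claim is then the weighted Chebyshev sum inequality for the weights `q^n`, whose total mass is
`(1 - q)⁻¹`. -/

theorem Finset.sum_mul_sum_le_sum_mul_sum_of_monovary {ι : Type*} (s : Finset ι)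
    {w F G : ι → ℝ} (hw : ∀ i ∈ s, 0 ≤ w i) (hFG : Monovary F G) :
    (∑ i ∈ s, F i * w i) * (∑ i ∈ s, G i * w i) ≤
      (∑ i ∈ s, w i) * ∑ i ∈ s, F i * G i * w i := by
  -- `2 (RHS - LHS)` is the double sum of `w i w j (F i - F j) (G i - G j) ≥ 0`.
  have expand : ∑ i ∈ s, ∑ j ∈ s, w i * w j * ((F i - F j) * (G i - G j)) =
      2 * ((∑ i ∈ s, w i) * (∑ i ∈ s, F i * G i * w i) -
        (∑ i ∈ s, F i * w i) * (∑ i ∈ s, G i * w i)) := by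
    calc _ = ∑ i ∈ s, ∑ j ∈ s, (F i * G i * w i * w j + w i * (F j * G j * w j)
          - F i * w i * (G j * w j) - G i * w i * (F j * w j)) :=
          Finset.sum_congr rfl fun i _ => Finset.sum_congr rfl fun j _ => by ring
      _ = _ := by
          simp only [Finset.sum_sub_distrib, Finset.sum_add_distrib, ← Finset.mul_sum,
            ← Finset.sum_mul]
          ring
  have hnonneg : 0 ≤ ∑ i ∈ s, ∑ j ∈ s, w i * w j * ((F i - F j) * (G i - G j)) :=
    Finset.sum_nonneg fun i hi => Finset.sum_nonneg fun j hj =>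
      mul_nonneg (mul_nonneg (hw i hi) (hw j hj)) (hFG.sub_mul_sub_nonneg j i)
  linarith

theorem tsum_mul_tsum_le_tsum_mul_tsum_of_monovary {ι : Type*} {w F G : ι → ℝ}
    (hw : ∀ i, 0 ≤ w i) (hFG : Monovary F G) (hsw : Summable w)
    (hsF : Summable fun i => F i * w i) (hsG : Summable fun i => G i * w i)
    (hsFG : Summable fun i => F i * G i * w i) :
    (∑' i, F i * w i) * (∑' i, G i * w i) ≤ (∑' i, w i) * ∑' i, F i * G i * w i :=
  le_of_tendsto_of_tendsto' (Tendsto.mul hsF.hasSum hsG.hasSum) (Tendsto.mul hsw.hasSum hsFG.hasSum)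
    fun s : Finset ι => s.sum_mul_sum_le_sum_mul_sum_of_monovary (fun i _ => hw i) hFG

theorem mul_pow_mem_Ioc {q b : ℝ} (hq0 : 0 < q) (hq1 : q ≤ 1) (hb : 0 < b) (n : ℕ) :
    b * q ^ n ∈ Ioc 0 b :=
  ⟨by positivity, mul_le_of_le_one_right hb.le (pow_le_one₀ hq0.le hq1)⟩

theorem antitone_apply_mul_pow {q b : ℝ} {f : ℝ → ℝ} (hq0 : 0 < q) (hq1 : q ≤ 1) (hb : 0 < b)
    (hf : ∀ x ∈ Ioc 0 b, f (q * x) ≤ f x) : Antitone fun n : ℕ => f (b * q ^ n) :=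
  antitone_nat_of_succ_le fun n => by
    simpa only [pow_succ, mul_comm q, mul_assoc] using hf _ (mul_pow_mem_Ioc hq0 hq1 hb n)

theorem monotone_apply_mul_pow {q b : ℝ} {f : ℝ → ℝ} (hq0 : 0 < q) (hq1 : q ≤ 1) (hb : 0 < b)
    (hf : ∀ x ∈ Ioc 0 b, f x ≤ f (q * x)) : Monotone fun n : ℕ => f (b * q ^ n) :=
  monotone_nat_of_le_succ fun n => by
    simpa only [pow_succ, mul_comm q, mul_assoc] using hf _ (mul_pow_mem_Ioc hq0 hq1 hb n)

/-- q-Chebyshev inequality for the Jackson q-integral over `[0,b]`. -/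
theorem q_chebyshev_Iq (q b : ℝ) (f g : ℝ → ℝ)
    (hq0 : 0 < q) (hq1 : q < 1) (hb : 0 < b)
    (hmono :
      ((∀ x ∈ Ioc (0:ℝ) b, f (q * x) ≤ f x) ∧ (∀ x ∈ Ioc (0:ℝ) b, g (q * x) ≤ g x)) ∨
      ((∀ x ∈ Ioc (0:ℝ) b, f x ≤ f (q * x)) ∧ (∀ x ∈ Ioc (0:ℝ) b, g x ≤ g (q * x))))
    (hsf : Summable (fun n : ℕ => f (b * q ^ n) * q ^ n))
    (hsg : Summable (fun n : ℕ => g (b * q ^ n) * q ^ n))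
    (hsfg : Summable (fun n : ℕ => f (b * q ^ n) * g (b * q ^ n) * q ^ n)) :
    b * (1 - q) * ∑' n : ℕ, f (b * q ^ n) * g (b * q ^ n) * q ^ n ≥
      (1 / b) * (b * (1 - q) * ∑' n : ℕ, f (b * q ^ n) * q ^ n) *
        (b * (1 - q) * ∑' n : ℕ, g (b * q ^ n) * q ^ n) := by
  have hFG : Monovary (fun n : ℕ => f (b * q ^ n)) (fun n => g (b * q ^ n)) := by
    rcases hmono with ⟨hf, hg⟩ | ⟨hf, hg⟩
    · exact (antitone_apply_mul_pow hq0 hq1.le hb hf).monovary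
        (antitone_apply_mul_pow hq0 hq1.le hb hg)
    · exact (monotone_apply_mul_pow hq0 hq1.le hb hf).monovary
        (monotone_apply_mul_pow hq0 hq1.le hb hg)
  have hcheb := tsum_mul_tsum_le_tsum_mul_tsum_of_monovary (fun n => pow_nonneg hq0.le n) hFG
    (summable_geometric_of_lt_one hq0.le hq1) hsf hsg hsfg
  rw [tsum_geometric_of_lt_one hq0.le hq1] at hcheb
  have hq : 0 < 1 - q := sub_pos.2 hq1
  calc (1 / b) * (b * (1 - q) * ∑' n : ℕ, f (b * q ^ n) * q ^ n) *
        (b * (1 - q) * ∑' n : ℕ, g (b * q ^ n) * q ^ n)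
      = b * (1 - q) ^ 2 * ((∑' n : ℕ, f (b * q ^ n) * q ^ n) *
          ∑' n : ℕ, g (b * q ^ n) * q ^ n) := by
        field_simp
    _ ≤ b * (1 - q) ^ 2 * ((1 - q)⁻¹ * ∑' n : ℕ, f (b * q ^ n) * g (b * q ^ n) * q ^ n) := by
        gcongr
    _ = b * (1 - q) * ∑' n : ℕ, f (b * q ^ n) * g (b * q ^ n) * q ^ n := by
        field_simp
end

section
/- Let 0 < q < 1 and a < b. If f, g : [a,b] → ℝ are both q-increasing or both q-decreasing on [a,b] and qR-integrable, then R_q(fg;a,b) ≥ (1/(b−a))·R_q(f;a,b)·R_q(g;a,b). -/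
/-!
With `F k = f (a + (b - a) q^k)` and `G k = g (a + (b - a) q^k)`, the q-integrals are
`(b - a)(1 - q) ∑ F k q^k`, etc. q-monotonicity makes `F` and `G` monotone sequences in
the same direction, so Chebyshev's sum inequality with the weights `q^k`, whose total mass is
`1 / (1 - q)`, gives `(∑ F k q^k)(∑ G k q^k) ≤ (1 - q)⁻¹ ∑ F k G k q^k`.
-/

open Set

open Finset in
theorem MonovaryOn.sum_mul_sum_le_sum_mul_sum {ι α : Type*} [CommRing α] [LinearOrder α]
    [IsStrictOrderedRing α] {s : Finset ι} {f g w : ι → α} (hfg : MonovaryOn f g s)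
    (hw : ∀ i ∈ s, 0 ≤ w i) :
    (∑ i ∈ s, f i * w i) * (∑ i ∈ s, g i * w i) ≤
      (∑ i ∈ s, w i) * ∑ i ∈ s, f i * g i * w i := by
  have sum_add_swap (φ : ι → ι → α) :
      ∑ i ∈ s, ∑ j ∈ s, (φ i j + φ j i) = 2 * ∑ i ∈ s, ∑ j ∈ s, φ i j := by
    simp only [sum_add_distrib]
    rw [sum_comm (f := fun i j => φ j i), two_mul]
  -- the rearrangement inequality for the pair `i, j`, weighted by `w i * w j`
  have key : ∑ i ∈ s, ∑ j ∈ s, (f i * w i * (g j * w j) + f j * w j * (g i * w i)) ≤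
      ∑ i ∈ s, ∑ j ∈ s, (w i * (f j * g j * w j) + w j * (f i * g i * w i)) :=
    sum_le_sum fun i hi => sum_le_sum fun j hj =>
      calc _ = w i * w j * (f i * g j + f j * g i) := by ring
        _ ≤ w i * w j * (f i * g i + f j * g j) :=
          mul_le_mul_of_nonneg_left (hfg.mul_add_mul_le_mul_add_mul hi hj)
            (mul_nonneg (hw i hi) (hw j hj))
        _ = _ := by ring
  rw [sum_add_swap, sum_add_swap, ← sum_mul_sum, ← sum_mul_sum] at key
  linarith

theorem Monovary.tsum_mul_tsum_le_tsum_mul_tsum {ι α : Type*} [CommRing α] [LinearOrder α]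
    [IsStrictOrderedRing α] [TopologicalSpace α] [OrderClosedTopology α] [ContinuousMul α]
    {f g w : ι → α} (hfg : Monovary f g) (hw : ∀ i, 0 ≤ w i) (hsw : Summable w)
    (hsf : Summable fun i => f i * w i) (hsg : Summable fun i => g i * w i)
    (hsfg : Summable fun i => f i * g i * w i) :
    (∑' i, f i * w i) * (∑' i, g i * w i) ≤ (∑' i, w i) * ∑' i, f i * g i * w i :=
  le_of_tendsto_of_tendsto' (Filter.Tendsto.mul hsf.hasSum hsg.hasSum)
    (Filter.Tendsto.mul hsw.hasSum hsfg.hasSum)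
    fun _ => (hfg.monovaryOn _).sum_mul_sum_le_sum_mul_sum fun i _ => hw i

section QMonotone

variable {β : Type*} [Preorder β] {q : ℝ} {φ : ℝ → β}

theorem antitone_comp_pow_of_comp_mul_le (hq0 : 0 < q) (hq1 : q ≤ 1)
    (hφ : ∀ x ∈ Ioc (0 : ℝ) 1, φ (q * x) ≤ φ x) : Antitone fun k : ℕ => φ (q ^ k) :=
  antitone_nat_of_succ_le fun k => by
    rw [pow_succ']
    exact hφ _ ⟨pow_pos hq0 k, pow_le_one₀ hq0.le hq1⟩

theorem monotone_comp_pow_of_le_comp_mul (hq0 : 0 < q) (hq1 : q ≤ 1)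
    (hφ : ∀ x ∈ Ioc (0 : ℝ) 1, φ x ≤ φ (q * x)) : Monotone fun k : ℕ => φ (q ^ k) :=
  antitone_comp_pow_of_comp_mul_le (β := βᵒᵈ) hq0 hq1 hφ

end QMonotone

/-- q-Chebyshev inequality for the Riemann-type q-integral. -/
theorem q_chebyshev_Rq (q a b : ℝ) (f g : ℝ → ℝ)
    (hq0 : 0 < q) (hq1 : q < 1) (hab : a < b)
    (hmono :
      ((∀ x ∈ Ioc (0:ℝ) 1, f (a + (b - a) * (q * x)) ≤ f (a + (b - a) * x)) ∧
        (∀ x ∈ Ioc (0:ℝ) 1, g (a + (b - a) * (q * x)) ≤ g (a + (b - a) * x))) ∨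
      ((∀ x ∈ Ioc (0:ℝ) 1, f (a + (b - a) * x) ≤ f (a + (b - a) * (q * x))) ∧
        (∀ x ∈ Ioc (0:ℝ) 1, g (a + (b - a) * x) ≤ g (a + (b - a) * (q * x)))))
    (hsf : Summable (fun k : ℕ => f (a + (b - a) * q ^ k) * q ^ k))
    (hsg : Summable (fun k : ℕ => g (a + (b - a) * q ^ k) * q ^ k))
    (hsfg : Summable (fun k : ℕ => f (a + (b - a) * q ^ k) * g (a + (b - a) * q ^ k) * q ^ k)) :
    (b - a) * (1 - q) * ∑' k : ℕ, f (a + (b - a) * q ^ k) * g (a + (b - a) * q ^ k) * q ^ k ≥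
      (1 / (b - a)) * ((b - a) * (1 - q) * ∑' k : ℕ, f (a + (b - a) * q ^ k) * q ^ k) *
        ((b - a) * (1 - q) * ∑' k : ℕ, g (a + (b - a) * q ^ k) * q ^ k) := by
  let F (x : ℝ) : ℝ := f (a + (b - a) * x)
  let G (x : ℝ) : ℝ := g (a + (b - a) * x)
  have hmonovary : Monovary (fun k : ℕ => F (q ^ k)) (fun k : ℕ => G (q ^ k)) := by
    rcases hmono with ⟨hf, hg⟩ | ⟨hf, hg⟩
    · exact (antitone_comp_pow_of_comp_mul_le (φ := F) hq0 hq1.le hf).monovary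
        (antitone_comp_pow_of_comp_mul_le (φ := G) hq0 hq1.le hg)
    · exact (monotone_comp_pow_of_le_comp_mul (φ := F) hq0 hq1.le hf).monovary
        (monotone_comp_pow_of_le_comp_mul (φ := G) hq0 hq1.le hg)
  have hcheb := hmonovary.tsum_mul_tsum_le_tsum_mul_tsum (fun k => pow_nonneg hq0.le k)
    (summable_geometric_of_lt_one hq0.le hq1) hsf hsg hsfg
  rw [tsum_geometric_of_lt_one hq0.le hq1, le_inv_mul_iff₀ (sub_pos.mpr hq1)] at hcheb
  set A := ∑' k : ℕ, f (a + (b - a) * q ^ k) * q ^ k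
  set B := ∑' k : ℕ, g (a + (b - a) * q ^ k) * q ^ k
  have hba : 0 < b - a := sub_pos.mpr hab
  calc 1 / (b - a) * ((b - a) * (1 - q) * A) * ((b - a) * (1 - q) * B)
      = (b - a) * (1 - q) * ((1 - q) * (A * B)) := by field_simp
    _ ≤ _ := by gcongr
end

section
/- For f(x) = x^3 and g(x) = x^4 on [1,2] with 0 < q < 1, one has I_q(x^3·x^4;1,2) − I_q(x^3;1,2)·I_q(x^4;1,2) = 255(1−q)/(1−q^8) − 465(1−q)^2/((1−q^4)(1−q^5)), and this quantity is positive for q > 1/2 and negative for q < 1/2. -/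
open scoped BigOperators

/-- Example for `f(x)=x³`, `g(x)=x⁴` on `[1,2]`:
`I_q(x⁷;1,2) − I_q(x³;1,2)·I_q(x⁴;1,2) = 255(1−q)/(1−q⁸) − 465(1−q)²/((1−q⁴)(1−q⁵))`,
positive for `q > 1/2`, negative for `q < 1/2`. -/
theorem example_chebyshev_fails (q : ℝ) (hq0 : 0 < q) (hq1 : q < 1) :
    ((2 * (1 - q) * ∑' n : ℕ, (2 * q ^ n) ^ 7 * q ^ n -
        (1 * (1 - q) * ∑' n : ℕ, (1 * q ^ n : ℝ) ^ 7 * q ^ n)) -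
      (2 * (1 - q) * ∑' n : ℕ, (2 * q ^ n) ^ 3 * q ^ n -
          (1 * (1 - q) * ∑' n : ℕ, (1 * q ^ n : ℝ) ^ 3 * q ^ n)) *
        (2 * (1 - q) * ∑' n : ℕ, (2 * q ^ n) ^ 4 * q ^ n -
          (1 * (1 - q) * ∑' n : ℕ, (1 * q ^ n : ℝ) ^ 4 * q ^ n)) =
      255 * (1 - q) / (1 - q ^ 8) - 465 * (1 - q) ^ 2 / ((1 - q ^ 4) * (1 - q ^ 5))) ∧
    (1 / 2 < q →
      0 < 255 * (1 - q) / (1 - q ^ 8) - 465 * (1 - q) ^ 2 / ((1 - q ^ 4) * (1 - q ^ 5))) ∧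
    (q < 1 / 2 →
      255 * (1 - q) / (1 - q ^ 8) - 465 * (1 - q) ^ 2 / ((1 - q ^ 4) * (1 - q ^ 5)) < 0) := by
  have hlt : ∀ k : ℕ, k ≠ 0 → q ^ k < 1 := fun k hk => pow_lt_one₀ hq0.le hq1 hk
  have h4 : (0:ℝ) < 1 - q ^ 4 := by linarith [hlt 4 (by norm_num)]
  have h5 : (0:ℝ) < 1 - q ^ 5 := by linarith [hlt 5 (by norm_num)]
  have h8 : (0:ℝ) < 1 - q ^ 8 := by linarith [hlt 8 (by norm_num)]
  have key : ∀ (c : ℝ) (m : ℕ), (∑' n : ℕ, (c * q ^ n) ^ m * q ^ n) = c ^ m * (1 - q ^ (m + 1))⁻¹ := by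
    intro c m
    have h1 : (∑' n : ℕ, (c * q ^ n) ^ m * q ^ n) = ∑' n : ℕ, c ^ m * (q ^ (m + 1)) ^ n := by
      apply tsum_congr; intro n; ring
    rw [h1, tsum_mul_left,
      tsum_geometric_of_lt_one (by positivity) (hlt (m + 1) (Nat.succ_ne_zero m))]
  have hcubic : (0:ℝ) < -7 * q ^ 3 + 5 * q ^ 2 + 11 * q + 14 := by nlinarith [pow_lt_one₀ hq0.le hq1 (by norm_num : (3:ℕ) ≠ 0), pow_pos hq0 2]
  have hsq : (0:ℝ) < (1 - q) ^ 2 := pow_pos (by linarith) 2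
  refine ⟨?_, ?_, ?_⟩
  · rw [key 2 7, key 1 7, key 2 3, key 1 3, key 2 4, key 1 4]
    field_simp
    ring
  · intro h
    rw [sub_pos, div_lt_div_iff₀ (by positivity) h8]
    nlinarith [mul_pos (mul_pos (mul_pos hsq h4) (by linarith : (0:ℝ) < 2 * q - 1)) hcubic]
  · intro h
    rw [sub_neg, div_lt_div_iff₀ h8 (by positivity)]
    nlinarith [mul_pos (mul_pos (mul_pos hsq h4) (by linarith : (0:ℝ) < 1 - 2 * q)) hcubic]
end

section
/- Let 0 < q < 1, 0 < a < b, and let f, g : [0,b] → ℝ be increasing with constants l_f, L_f, l_g, L_g > 0 satisfying a²/b² ≤ l_f/L_f, a²/b² ≤ l_g/L_g, and l_f ≤ (f(x)−f(y))/(x−y) ≤ L_f, l_g ≤ (g(x)−g(y))/(x−y) ≤ L_g for all distinct x,y ∈ [0,b]. Then I_q(fg;a,b) ≥ (1/(b−a))·I_q(f;a,b)·I_q(g;a,b) − (a·b·(b−a)/[3]_q)·L_f·L_g, where [3]_q = 1+q+q². -/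
open Set

/-!
With the weights `w n = (1 - q) q^n`, which sum to `1`, one has
`I_q(h;a,b) = ∑ (b h(b q^n) - a h(a q^n)) w n`. Put `F n = b f(b q^n) - a f(a q^n)`, `G n`
likewise, and `D n = (f(b q^n) - f(a q^n)) (g(b q^n) - g(a q^n))`. The identity
`F n G n - a b D n = (b - a) (b (f g)(b q^n) - a (f g)(a q^n))` turns Chebyshev's inequality
`I_q(f;a,b) I_q(g;a,b) ≤ ∑ F G w` into the claim, because `D n ≤ L_f L_g (b - a)² q^(2n)` gives
`∑ D w ≤ L_f L_g (b - a)² / [3]_q`. Chebyshev's inequality applies since `a²/b² ≤ l/L` makes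
`t ↦ b f(b t) - a f(a t)` increasing on `[0,1]`, so that `F` and `G` both decrease.
-/

/-- Chebyshev's sum inequality: the double sum of the nonnegative terms
`w i * w j * ((F i - F j) * (G i - G j))` equals `2 * (W * SFG - SF * SG)`. -/
theorem Monovary.mul_le_mul_of_hasSum {ι : Type*} {w F G : ι → ℝ} {W SF SG SFG : ℝ}
    (hFG : Monovary F G) (hw : ∀ i, 0 ≤ w i) (hW : HasSum w W)
    (hSF : HasSum (fun i => F i * w i) SF) (hSG : HasSum (fun i => G i * w i) SG)
    (hSFG : HasSum (fun i => F i * G i * w i) SFG) :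
    SF * SG ≤ W * SFG := by
  have inner : ∀ i, HasSum (fun j => w i * w j * ((F i - F j) * (G i - G j)))
      (F i * G i * w i * W - F i * w i * SG - G i * w i * SF + w i * SFG) := by
    intro i
    exact ((((hW.mul_left (F i * G i * w i)).sub (hSG.mul_left (F i * w i))).sub
      (hSF.mul_left (G i * w i))).add (hSFG.mul_left (w i))).congr_fun fun j => by ring
  have outer : HasSum
      (fun i => F i * G i * w i * W - F i * w i * SG - G i * w i * SF + w i * SFG)
      (SFG * W - SF * SG - SG * SF + W * SFG) :=
    (((hSFG.mul_right W).sub (hSF.mul_right SG)).sub (hSG.mul_right SF)).add (hW.mul_right SFG)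
  have := outer.nonneg fun i => (inner i).nonneg fun j =>
    mul_nonneg (mul_nonneg (hw i) (hw j)) (hFG.sub_mul_sub_nonneg j i)
  linarith

theorem mul_mem_Icc_zero {b c t : ℝ} (hc : c ∈ Icc 0 b) (ht : t ∈ Icc 0 1) :
    c * t ∈ Icc 0 b :=
  ⟨mul_nonneg hc.1 ht.1, (mul_le_of_le_one_right hc.1 ht.2).trans hc.2⟩

theorem pow_mem_Icc_zero_one {q : ℝ} (hq0 : 0 ≤ q) (hq1 : q ≤ 1) (n : ℕ) : q ^ n ∈ Icc 0 1 :=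
  ⟨pow_nonneg hq0 n, pow_le_one₀ hq0 hq1⟩

theorem MonotoneOn.abs_le_max_abs {f : ℝ → ℝ} {u v x : ℝ} (hf : MonotoneOn f (Icc u v))
    (hx : x ∈ Icc u v) : |f x| ≤ max |f u| |f v| :=
  have huv : u ≤ v := hx.1.trans hx.2
  abs_le_max_abs_abs (hf ⟨le_rfl, huv⟩ hx hx.1) (hf hx ⟨huv, le_rfl⟩ hx.2)

theorem hasSum_one_sub_mul_geometric {q : ℝ} (hq0 : 0 ≤ q) (hq1 : q < 1) :
    HasSum (fun n : ℕ => (1 - q) * q ^ n) 1 := by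
  have := (hasSum_geometric_of_lt_one hq0 hq1).mul_left (1 - q)
  rwa [mul_inv_cancel₀ (sub_ne_zero.2 hq1.ne')] at this

/-- Where `[3]_q` comes from: `∑ (1 - q) q^n q^(2n) = (1 - q) / (1 - q^3) = 1 / [3]_q`. -/
theorem exists_hasSum_mul_le_of_mem_Icc {x y : ℕ → ℝ} {A B q : ℝ} (hq0 : 0 ≤ q) (hq1 : q < 1)
    (hx : ∀ n, x n ∈ Icc 0 (A * q ^ n)) (hy : ∀ n, y n ∈ Icc 0 (B * q ^ n)) :
    ∃ S, HasSum (fun n => x n * y n * ((1 - q) * q ^ n)) S ∧ S ≤ A * B / (1 + q + q ^ 2) := by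
  have hw : ∀ n : ℕ, 0 ≤ (1 - q) * q ^ n := fun n => mul_nonneg (by linarith) (pow_nonneg hq0 n)
  have hq3 : q ^ 3 < 1 := pow_lt_one₀ hq0 hq1 (by norm_num)
  have hgeom := (hasSum_geometric_of_lt_one (pow_nonneg hq0 3) hq3).mul_left (A * B * (1 - q))
  have hle : ∀ n, x n * y n * ((1 - q) * q ^ n) ≤ A * B * (1 - q) * (q ^ 3) ^ n := fun n => by
    calc x n * y n * ((1 - q) * q ^ n) ≤ A * q ^ n * (B * q ^ n) * ((1 - q) * q ^ n) :=
          mul_le_mul_of_nonneg_right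
            (mul_le_mul (hx n).2 (hy n).2 (hy n).1 ((hx n).1.trans (hx n).2)) (hw n)
      _ = A * B * (1 - q) * (q ^ 3) ^ n := by ring
  have hsum : Summable fun n => x n * y n * ((1 - q) * q ^ n) :=
    hgeom.summable.of_nonneg_of_le (fun n => mul_nonneg (mul_nonneg (hx n).1 (hy n).1) (hw n)) hle
  refine ⟨_, hsum.hasSum, (hasSum_le hle hsum.hasSum hgeom).trans_eq ?_⟩
  have : (1 : ℝ) - q ^ 3 = (1 - q) * (1 + q + q ^ 2) := by ring
  rw [this, mul_inv, ← mul_assoc, mul_assoc (A * B), mul_inv_cancel₀ (by linarith), mul_one,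
    div_eq_mul_inv]

def SlopeBoundedOn (f : ℝ → ℝ) (s : Set ℝ) (l L : ℝ) : Prop :=
  ∀ x ∈ s, ∀ y ∈ s, x ≠ y → l ≤ (f x - f y) / (x - y) ∧ (f x - f y) / (x - y) ≤ L

namespace SlopeBoundedOn

variable {f : ℝ → ℝ} {s : Set ℝ} {a b l L t x y : ℝ}

theorem sub_mem_Icc (h : SlopeBoundedOn f s l L) (hx : x ∈ s) (hy : y ∈ s) (hyx : y < x) :
    f x - f y ∈ Icc (l * (x - y)) (L * (x - y)) := by
  obtain ⟨hl, hL⟩ := h x hx y hy hyx.ne'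
  have hd : 0 < x - y := sub_pos.2 hyx
  exact ⟨(le_div_iff₀ hd).1 hl, (div_le_iff₀ hd).1 hL⟩

theorem monotoneOn_dilation_sub (h : SlopeBoundedOn f (Icc 0 b) l L) (ha : 0 < a)
    (hab : a ≤ b) (hL : 0 < L) (hr : a ^ 2 / b ^ 2 ≤ l / L) :
    MonotoneOn (fun t => b * f (b * t) - a * f (a * t)) (Icc 0 1) := by
  intro t ht u hu htu
  rcases htu.eq_or_lt with rfl | htu
  · rfl
  have hb : 0 < b := ha.trans_le hab
  have hLl : L * a ^ 2 ≤ l * b ^ 2 := by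
    rw [div_le_div_iff₀ (by positivity) hL] at hr
    linarith
  have hbI : b ∈ Icc 0 b := ⟨hb.le, le_rfl⟩
  have haI : a ∈ Icc 0 b := ⟨ha.le, hab⟩
  have hfb := h.sub_mem_Icc (mul_mem_Icc_zero hbI hu) (mul_mem_Icc_zero hbI ht)
    (mul_lt_mul_of_pos_left htu hb)
  have hfa := h.sub_mem_Icc (mul_mem_Icc_zero haI hu) (mul_mem_Icc_zero haI ht)
    (mul_lt_mul_of_pos_left htu ha)
  suffices a * (f (a * u) - f (a * t)) ≤ b * (f (b * u) - f (b * t)) by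
    simp only
    linarith
  calc a * (f (a * u) - f (a * t)) ≤ a * (L * (a * u - a * t)) :=
        mul_le_mul_of_nonneg_left hfa.2 ha.le
    _ = L * a ^ 2 * (u - t) := by ring
    _ ≤ l * b ^ 2 * (u - t) := mul_le_mul_of_nonneg_right hLl (sub_nonneg.2 htu.le)
    _ = b * (l * (b * u - b * t)) := by ring
    _ ≤ b * (f (b * u) - f (b * t)) := mul_le_mul_of_nonneg_left hfb.1 hb.le

theorem antitone_dilation_sub_pow (h : SlopeBoundedOn f (Icc 0 b) l L) (ha : 0 < a)
    (hab : a ≤ b) (hL : 0 < L) (hr : a ^ 2 / b ^ 2 ≤ l / L) {q : ℝ} (hq0 : 0 ≤ q) (hq1 : q ≤ 1) :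
    Antitone fun n : ℕ => b * f (b * q ^ n) - a * f (a * q ^ n) := fun n m hnm =>
  h.monotoneOn_dilation_sub ha hab hL hr (pow_mem_Icc_zero_one hq0 hq1 m)
    (pow_mem_Icc_zero_one hq0 hq1 n) (pow_le_pow_of_le_one hq0 hq1 hnm)

theorem sub_comp_mul_mem_Icc (h : SlopeBoundedOn f (Icc 0 b) l L)
    (hf : MonotoneOn f (Icc 0 b)) (ha : 0 ≤ a) (hab : a < b) (ht0 : 0 < t) (ht1 : t ≤ 1) :
    f (b * t) - f (a * t) ∈ Icc 0 (L * (b - a) * t) := by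
  have htI : t ∈ Icc 0 1 := ⟨ht0.le, ht1⟩
  have hbt := mul_mem_Icc_zero ⟨ha.trans hab.le, le_rfl⟩ htI
  have hat := mul_mem_Icc_zero ⟨ha, hab.le⟩ htI
  have hlt : a * t < b * t := mul_lt_mul_of_pos_right hab ht0
  refine ⟨sub_nonneg.2 (hf hat hbt hlt.le), ?_⟩
  calc f (b * t) - f (a * t) ≤ L * (b * t - a * t) := (h.sub_mem_Icc hbt hat hlt).2
    _ = L * (b - a) * t := by ring

end SlopeBoundedOn

/-- Jackson's q-integral `I_q(f;0,c)`. -/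
noncomputable def jacksonIntegral (q c : ℝ) (f : ℝ → ℝ) : ℝ :=
  c * (1 - q) * ∑' n : ℕ, f (c * q ^ n) * q ^ n

theorem hasSum_jacksonIntegral_sub {h : ℝ → ℝ} {M a b q : ℝ}
    (hM : ∀ x ∈ Icc 0 b, |h x| ≤ M) (ha : a ∈ Icc 0 b) (hq0 : 0 ≤ q) (hq1 : q < 1) :
    HasSum (fun n : ℕ => (b * h (b * q ^ n) - a * h (a * q ^ n)) * ((1 - q) * q ^ n))
      (jacksonIntegral q b h - jacksonIntegral q a h) := by
  have hasSum_at : ∀ c ∈ Icc 0 b, HasSum (fun n : ℕ => c * h (c * q ^ n) * ((1 - q) * q ^ n))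
      (jacksonIntegral q c h) := fun c hc => by
    have hsum : Summable fun n : ℕ => h (c * q ^ n) * q ^ n := by
      refine Summable.of_norm_bounded ((summable_geometric_of_lt_one hq0 hq1).mul_left M)
        fun n => ?_
      rw [Real.norm_eq_abs, abs_mul, abs_of_nonneg (pow_nonneg hq0 n)]
      exact mul_le_mul_of_nonneg_right
        (hM _ (mul_mem_Icc_zero hc (pow_mem_Icc_zero_one hq0 hq1.le n))) (pow_nonneg hq0 n)
    exact (hsum.hasSum.mul_left (c * (1 - q))).congr_fun fun n => by ring
  exact ((hasSum_at b ⟨ha.1.trans ha.2, le_rfl⟩).sub (hasSum_at a ha)).congr_fun fun n => by ring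

theorem q_chebyshev_correction_a_general (q a b lf Lf lg Lg : ℝ) (f g : ℝ → ℝ)
    (hq0 : 0 < q) (hq1 : q < 1) (ha : 0 < a) (hab : a < b)
    (hLf : 0 < Lf) (hLg : 0 < Lg)
    (hrf : a ^ 2 / b ^ 2 ≤ lf / Lf) (hrg : a ^ 2 / b ^ 2 ≤ lg / Lg)
    (hfmono : MonotoneOn f (Icc 0 b)) (hgmono : MonotoneOn g (Icc 0 b))
    (hslopef : ∀ x ∈ Icc (0:ℝ) b, ∀ y ∈ Icc (0:ℝ) b, x ≠ y →
      lf ≤ (f x - f y) / (x - y) ∧ (f x - f y) / (x - y) ≤ Lf)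
    (hslopeg : ∀ x ∈ Icc (0:ℝ) b, ∀ y ∈ Icc (0:ℝ) b, x ≠ y →
      lg ≤ (g x - g y) / (x - y) ∧ (g x - g y) / (x - y) ≤ Lg) :
    (b * (1 - q) * ∑' n : ℕ, f (b * q ^ n) * g (b * q ^ n) * q ^ n) -
        (a * (1 - q) * ∑' n : ℕ, f (a * q ^ n) * g (a * q ^ n) * q ^ n) ≥
      (1 / (b - a)) *
          ((b * (1 - q) * ∑' n : ℕ, f (b * q ^ n) * q ^ n) -
            (a * (1 - q) * ∑' n : ℕ, f (a * q ^ n) * q ^ n)) *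
          ((b * (1 - q) * ∑' n : ℕ, g (b * q ^ n) * q ^ n) -
            (a * (1 - q) * ∑' n : ℕ, g (a * q ^ n) * q ^ n)) -
        (a * b * (b - a) / (1 + q + q ^ 2)) * Lf * Lg := by
  show jacksonIntegral q b (fun x => f x * g x) - jacksonIntegral q a (fun x => f x * g x) ≥
    1 / (b - a) * (jacksonIntegral q b f - jacksonIntegral q a f) *
      (jacksonIntegral q b g - jacksonIntegral q a g) -
        a * b * (b - a) / (1 + q + q ^ 2) * Lf * Lg
  have hb : 0 < b := ha.trans hab
  have haI : a ∈ Icc 0 b := ⟨ha.le, hab.le⟩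
  have hf : SlopeBoundedOn f (Icc 0 b) lf Lf := hslopef
  have hg : SlopeBoundedOn g (Icc 0 b) lg Lg := hslopeg
  have hbf := fun x (hx : x ∈ Icc 0 b) => hfmono.abs_le_max_abs hx
  have hbg := fun x (hx : x ∈ Icc 0 b) => hgmono.abs_le_max_abs hx
  have hbfg : ∀ x ∈ Icc 0 b, |f x * g x| ≤ max |f 0| |f b| * max |g 0| |g b| := fun x hx =>
    (abs_mul _ _).trans_le (mul_le_mul (hbf x hx) (hbg x hx) (abs_nonneg _) (by positivity))
  have hIf := hasSum_jacksonIntegral_sub hbf haI hq0.le hq1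
  have hIg := hasSum_jacksonIntegral_sub hbg haI hq0.le hq1
  have hIfg := hasSum_jacksonIntegral_sub hbfg haI hq0.le hq1
  have hFG := (hf.antitone_dilation_sub_pow ha hab.le hLf hrf hq0.le hq1.le).monovary
    (hg.antitone_dilation_sub_pow ha hab.le hLg hrg hq0.le hq1.le)
  have hqn := pow_mem_Icc_zero_one hq0.le hq1.le
  obtain ⟨S, hS, hSle⟩ := exists_hasSum_mul_le_of_mem_Icc hq0.le hq1
    (fun n => hf.sub_comp_mul_mem_Icc hfmono ha.le hab (pow_pos hq0 n) (hqn n).2)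
    (fun n => hg.sub_comp_mul_mem_Icc hgmono ha.le hab (pow_pos hq0 n) (hqn n).2)
  have hcheb := hFG.mul_le_mul_of_hasSum (fun n => mul_nonneg (sub_nonneg.2 hq1.le) (hqn n).1)
    (hasSum_one_sub_mul_geometric hq0.le hq1) hIf hIg
    (((hIfg.mul_left (b - a)).add (hS.mul_left (a * b))).congr_fun fun n => by ring)
  rw [ge_iff_le, sub_le_iff_le_add, mul_assoc, one_div_mul_eq_div, div_le_iff₀ (sub_pos.2 hab)]
  linear_combination hcheb + a * b * hSle

/-- Chebyshev-type bound for `I_q(·;a,b)` with correction term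
`a·b·(b−a)·L_f·L_g/[3]_q`. -/
theorem q_chebyshev_correction_a (q a b lf Lf lg Lg : ℝ) (f g : ℝ → ℝ)
    (hq0 : 0 < q) (hq1 : q < 1) (ha : 0 < a) (hab : a < b)
    (hlf : 0 < lf) (hLf : 0 < Lf) (hlg : 0 < lg) (hLg : 0 < Lg)
    (hrf : a ^ 2 / b ^ 2 ≤ lf / Lf) (hrg : a ^ 2 / b ^ 2 ≤ lg / Lg)
    (hfmono : MonotoneOn f (Icc 0 b)) (hgmono : MonotoneOn g (Icc 0 b))
    (hslopef : ∀ x ∈ Icc (0:ℝ) b, ∀ y ∈ Icc (0:ℝ) b, x ≠ y →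
      lf ≤ (f x - f y) / (x - y) ∧ (f x - f y) / (x - y) ≤ Lf)
    (hslopeg : ∀ x ∈ Icc (0:ℝ) b, ∀ y ∈ Icc (0:ℝ) b, x ≠ y →
      lg ≤ (g x - g y) / (x - y) ∧ (g x - g y) / (x - y) ≤ Lg) :
    (b * (1 - q) * ∑' n : ℕ, f (b * q ^ n) * g (b * q ^ n) * q ^ n) -
        (a * (1 - q) * ∑' n : ℕ, f (a * q ^ n) * g (a * q ^ n) * q ^ n) ≥
      (1 / (b - a)) *
          ((b * (1 - q) * ∑' n : ℕ, f (b * q ^ n) * q ^ n) -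
            (a * (1 - q) * ∑' n : ℕ, f (a * q ^ n) * q ^ n)) *
          ((b * (1 - q) * ∑' n : ℕ, g (b * q ^ n) * q ^ n) -
            (a * (1 - q) * ∑' n : ℕ, g (a * q ^ n) * q ^ n)) -
        (a * b * (b - a) / (1 + q + q ^ 2)) * Lf * Lg :=
  q_chebyshev_correction_a_general q a b lf Lf lg Lg f g hq0 hq1 ha hab hLf hLg hrf hrg hfmono
    hgmono hslopef hslopeg
end

section
/- Let 0 < q < 1, b > 0, and f, g : [0,b] → ℝ with m ≤ f ≤ M and φ ≤ g ≤ Φ on [0,b]. Then |(1/b)·I_q(fg;0,b) − (1/b²)·I_q(f;0,b)·I_q(g;0,b)| ≤ (1/4)(M−m)(Φ−φ). -/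
/-! With the weights `(1 - q) q ^ n`, which sum to one, `(1 / b) I_q(h; 0, b)` is the expectation
of `n ↦ h (b q ^ n)` under the geometric distribution of parameter `1 - q`, so the quantity to
bound is a covariance. Grüss' inequality for a probability measure follows from the
Cauchy–Schwarz inequality `cov[X, Y] ^ 2 ≤ Var[X] Var[Y]` (nonnegativity of the discriminant of
`t ↦ Var[t X - Y]`) and Popoviciu's bound `Var[X] ≤ ((M - m) / 2) ^ 2`. -/

open Set MeasureTheory ProbabilityTheory

section Gruss

variable {Ω : Type*} {mΩ : MeasurableSpace Ω} {μ : Measure Ω} {X Y : Ω → ℝ}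

theorem sq_covariance_le_variance_mul_variance [IsFiniteMeasure μ]
    (hX : MemLp X 2 μ) (hY : MemLp Y 2 μ) :
    cov[X, Y; μ] ^ 2 ≤ Var[X; μ] * Var[Y; μ] := by
  have hquad : ∀ t : ℝ, 0 ≤ Var[X; μ] * (t * t) + (-2 * cov[X, Y; μ]) * t + Var[Y; μ] := by
    intro t
    have h := variance_nonneg (t • X - Y) μ
    rw [variance_sub (hX.const_smul t) hY, variance_smul, covariance_smul_left] at h
    linarith
  have := discrim_le_zero hquad
  rw [discrim] at this
  linarith

theorem abs_covariance_le_of_bounded [IsProbabilityMeasure μ] {m M φ Φ : ℝ}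
    (hXb : ∀ᵐ ω ∂μ, X ω ∈ Icc m M) (hYb : ∀ᵐ ω ∂μ, Y ω ∈ Icc φ Φ)
    (hX : AEStronglyMeasurable X μ) (hY : AEStronglyMeasurable Y μ) :
    |cov[X, Y; μ]| ≤ (1 / 4) * (M - m) * (Φ - φ) := by
  obtain ⟨ω, hXω, hYω⟩ := (hXb.and hYb).exists
  have hVarX := variance_le_sq_of_bounded hXb hX.aemeasurable
  have hVarY := variance_le_sq_of_bounded hYb hY.aemeasurable
  have hcov := sq_covariance_le_variance_mul_variance (memLp_of_bounded hXb hX 2)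
    (memLp_of_bounded hYb hY 2)
  refine abs_le_of_sq_le_sq ?_ (by nlinarith [hXω.1, hXω.2, hYω.1, hYω.2])
  calc cov[X, Y; μ] ^ 2 ≤ Var[X; μ] * Var[Y; μ] := hcov
    _ ≤ ((M - m) / 2) ^ 2 * ((Φ - φ) / 2) ^ 2 :=
      mul_le_mul hVarX hVarY (variance_nonneg _ _) (sq_nonneg _)
    _ = ((1 / 4) * (M - m) * (Φ - φ)) ^ 2 := by ring

end Gruss

theorem integral_geometricMeasure_eq_mul_tsum {p : unitInterval} (hp : p ≠ 0) (F : ℕ → ℝ) :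
    ∫ n, F n ∂geometricMeasure p = p * ∑' n : ℕ, F n * (1 - p : ℝ) ^ n := by
  rw [integral_geometricMeasure hp, ← tsum_mul_left]
  congr with n
  rw [smul_eq_mul]
  ring

/-- q-Grüss inequality for the Jackson q-integral over `[0,b]`. -/
theorem q_gruss_Iq0b (q b m M φ Φ : ℝ) (f g : ℝ → ℝ)
    (hq0 : 0 < q) (hq1 : q < 1) (hb : 0 < b)
    (hf : ∀ x ∈ Icc (0:ℝ) b, m ≤ f x ∧ f x ≤ M)
    (hg : ∀ x ∈ Icc (0:ℝ) b, φ ≤ g x ∧ g x ≤ Φ) :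
    |(1 / b) * (b * (1 - q) * ∑' n : ℕ, f (b * q ^ n) * g (b * q ^ n) * q ^ n) -
        (1 / b ^ 2) * (b * (1 - q) * ∑' n : ℕ, f (b * q ^ n) * q ^ n) *
          (b * (1 - q) * ∑' n : ℕ, g (b * q ^ n) * q ^ n)| ≤
      (1 / 4) * (M - m) * (Φ - φ) := by
  set p : unitInterval := ⟨1 - q, by linarith, by linarith⟩
  have hp_val : (p : ℝ) = 1 - q := rfl
  have hp : p ≠ 0 := fun h => by
    have := congrArg Subtype.val h
    rw [hp_val, Icc.coe_zero] at this
    linarith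
  have hnode : ∀ n : ℕ, b * q ^ n ∈ Icc 0 b := fun n =>
    ⟨by positivity, mul_le_of_le_one_right hb.le (pow_le_one₀ hq0.le hq1.le)⟩
  set F : ℕ → ℝ := fun n => f (b * q ^ n)
  set G : ℕ → ℝ := fun n => g (b * q ^ n)
  have hFb : ∀ᵐ n ∂geometricMeasure p, F n ∈ Icc m M := ae_of_all _ fun n => hf _ (hnode n)
  have hGb : ∀ᵐ n ∂geometricMeasure p, G n ∈ Icc φ Φ := ae_of_all _ fun n => hg _ (hnode n)
  have hFm := (measurable_of_countable F).aestronglyMeasurable (μ := geometricMeasure p)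
  have hGm := (measurable_of_countable G).aestronglyMeasurable (μ := geometricMeasure p)
  have hgruss := abs_covariance_le_of_bounded hFb hGb hFm hGm
  rw [covariance_eq_sub (memLp_of_bounded hFb hFm 2) (memLp_of_bounded hGb hGm 2)] at hgruss
  simp only [Pi.mul_apply, integral_geometricMeasure_eq_mul_tsum hp, hp_val, sub_sub_cancel]
    at hgruss
  convert hgruss using 2
  simp only [F, G]
  field_simp
end

section
/- Let 0 < q < 1, 0 < a < b, and f, g : [0,b] → ℝ bounded with m ≤ f ≤ M, φ ≤ g ≤ Φ on [0,b]. Then |(1/(b−a))·I_q(fg;a,b) − (1/(b−a)²)·I_q(f;a,b)·I_q(g;a,b)| ≤ (1/4)(M−m)(Φ−φ)·(1 + 4ab/(b−a)²). -/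
/-!
Put `A = a / (b - a)` and `E_c h = (1 - q) ∑ h (c qⁿ) qⁿ`, an average against the geometric
weights `(1 - q) qⁿ`. Then `I_q(h; a, b) / (b - a) = (A + 1) E_b h - A E_a h` and
`1 + 4ab / (b - a)² = (2A + 1)²`. The Grüss defect of this signed average equals
`(A + 1) Cov_b(f, g) - A Cov_a(f, g) - A (A + 1) (E_b f - E_a f) (E_b g - E_a g)`, which does not
change when `f` and `g` are shifted by constants, so they may be centred: `|f| ≤ s`, `|g| ≤ t`.
For centred sequences `s |Cov(f, g)| ≤ t (s² - (E f)²)`, and an elementary quadratic inequality in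
`E_b f` and `E_a f` finishes the proof.
-/

open Set BoundedContinuousFunction

noncomputable def qMean (q : ℝ) (x : ℕ → ℝ) : ℝ := (1 - q) * ∑' n, x n * q ^ n

noncomputable def qCov (q : ℝ) (x y : ℕ → ℝ) : ℝ := qMean q (x * y) - qMean q x * qMean q y

section qMean

variable {q : ℝ}

theorem summable_mul_pow (hq0 : 0 ≤ q) (hq1 : q < 1) (x : ℕ →ᵇ ℝ) :
    Summable fun n => x n * q ^ n :=
  ((summable_geometric_of_lt_one hq0 hq1).mul_left ‖x‖).of_norm_bounded fun n => by
    rw [norm_mul, norm_pow, Real.norm_of_nonneg hq0]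
    exact mul_le_mul_of_nonneg_right (norm_coe_le_norm x n) (pow_nonneg hq0 n)

theorem qMean_add (hq0 : 0 ≤ q) (hq1 : q < 1) (x y : ℕ →ᵇ ℝ) :
    qMean q ⇑(x + y) = qMean q x + qMean q y := by
  simp only [qMean, coe_add, Pi.add_apply, add_mul,
    (summable_mul_pow hq0 hq1 x).tsum_add (summable_mul_pow hq0 hq1 y)]
  ring

theorem qMean_sub (hq0 : 0 ≤ q) (hq1 : q < 1) (x y : ℕ →ᵇ ℝ) :
    qMean q ⇑(x - y) = qMean q x - qMean q y := by
  simp only [qMean, coe_sub, Pi.sub_apply, sub_mul,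
    (summable_mul_pow hq0 hq1 x).tsum_sub (summable_mul_pow hq0 hq1 y)]
  ring

theorem qMean_smul (c : ℝ) (x : ℕ →ᵇ ℝ) : qMean q ⇑(c • x) = c * qMean q x := by
  simp only [qMean, coe_smul, smul_eq_mul, mul_assoc, tsum_mul_left]
  ring

theorem qMean_const (hq0 : 0 ≤ q) (hq1 : q < 1) (c : ℝ) : qMean q ⇑(const ℕ c) = c := by
  have hq : 1 - q ≠ 0 := by linarith
  simp only [qMean, const_apply', tsum_mul_left, tsum_geometric_of_lt_one hq0 hq1]
  field_simp

theorem abs_qMean_le_qMean (hq0 : 0 ≤ q) (hq1 : q < 1) {x : ℕ → ℝ} {w : ℕ →ᵇ ℝ}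
    (hxw : ∀ n, |x n| ≤ w n) : |qMean q x| ≤ qMean q w := by
  rw [qMean, qMean, abs_mul, abs_of_nonneg (by linarith : 0 ≤ 1 - q)]
  refine mul_le_mul_of_nonneg_left ?_ (by linarith)
  rw [← Real.norm_eq_abs]
  refine tsum_of_norm_bounded (summable_mul_pow hq0 hq1 w).hasSum fun n => ?_
  rw [norm_mul, norm_pow, Real.norm_eq_abs, Real.norm_of_nonneg hq0]
  exact mul_le_mul_of_nonneg_right (hxw n) (pow_nonneg hq0 n)

theorem abs_qMean_le (hq0 : 0 ≤ q) (hq1 : q < 1) {x : ℕ → ℝ} {C : ℝ} (hx : ∀ n, |x n| ≤ C) :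
    |qMean q x| ≤ C := by
  simpa only [qMean_const hq0 hq1] using abs_qMean_le_qMean hq0 hq1 (w := const ℕ C) hx

theorem qCov_sub_const (hq0 : 0 ≤ q) (hq1 : q < 1) (x y : ℕ →ᵇ ℝ) (c d : ℝ) :
    qCov q ⇑(x - const ℕ c) ⇑(y - const ℕ d) = qCov q x y := by
  have hexp : (x - const ℕ c) * (y - const ℕ d) = x * y - c • y - d • x + const ℕ (c * d) := by
    ext n
    simp only [coe_mul, coe_sub, coe_add, coe_smul, Pi.mul_apply, Pi.sub_apply, Pi.add_apply,
      const_apply', smul_eq_mul]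
    ring
  simp only [qCov, ← coe_mul, hexp, qMean_add hq0 hq1, qMean_sub hq0 hq1, qMean_smul,
    qMean_const hq0 hq1]
  ring

end qMean

-- `s² - p x - s |x - p|` is `(s - x)(s + p)` or `(s + x)(s - p)`, according to the sign of `x - p`.
theorem mul_abs_sub_le_sq_sub_mul {s x p : ℝ} (hx : |x| ≤ s) (hp : |p| ≤ s) :
    s * |x - p| ≤ s ^ 2 - p * x := by
  obtain ⟨hx₁, hx₂⟩ := abs_le.mp hx
  obtain ⟨hp₁, hp₂⟩ := abs_le.mp hp
  rcases abs_cases (x - p) with ⟨h, -⟩ | ⟨h, -⟩ <;> rw [h] <;> nlinarith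

theorem mul_abs_qCov_le {q : ℝ} (hq0 : 0 ≤ q) (hq1 : q < 1) {x y : ℕ →ᵇ ℝ} {s t : ℝ}
    (hx : ∀ n, |x n| ≤ s) (hy : ∀ n, |y n| ≤ t) :
    s * |qCov q x y| ≤ t * (s ^ 2 - qMean q x ^ 2) := by
  set p := qMean q x
  have hs : 0 ≤ s := (abs_nonneg _).trans (hx 0)
  have hp : |p| ≤ s := abs_qMean_le hq0 hq1 hx
  have hcov : s * qCov q x y = qMean q ⇑(s • ((x - const ℕ p) * y)) := by
    have : (x - const ℕ p) * y = x * y - p • y := by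
      ext n
      simp only [coe_mul, coe_sub, coe_smul, Pi.mul_apply, Pi.sub_apply, const_apply',
        smul_eq_mul]
      ring
    rw [this, qMean_smul, qMean_sub hq0 hq1, qMean_smul, coe_mul, qCov]
  have hpoint : ∀ n, |(s • ((x - const ℕ p) * y)) n| ≤ (t • (const ℕ (s ^ 2) - p • x)) n := by
    intro n
    simp only [coe_smul, coe_mul, coe_sub, Pi.mul_apply, Pi.sub_apply, const_apply',
      smul_eq_mul, abs_mul, abs_of_nonneg hs]
    rw [← mul_assoc, mul_comm t]
    exact mul_le_mul (mul_abs_sub_le_sq_sub_mul (hx n) hp) (hy n) (abs_nonneg _)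
      (by nlinarith [abs_nonneg (x n - p), mul_abs_sub_le_sq_sub_mul (hx n) hp])
  calc s * |qCov q x y| = |qMean q ⇑(s • ((x - const ℕ p) * y))| := by
        rw [← hcov, abs_mul, abs_of_nonneg hs]
    _ ≤ qMean q ⇑(t • (const ℕ (s ^ 2) - p • x)) := abs_qMean_le_qMean hq0 hq1 hpoint
    _ = t * (s ^ 2 - p ^ 2) := by
        rw [qMean_smul, qMean_sub hq0 hq1, qMean_smul, qMean_const hq0 hq1]
        ring

theorem add_one_mul_sq_sub_sq_add_le {A s u v : ℝ} (hA : 0 ≤ A) (hu : |u| ≤ s) (hv : |v| ≤ s) :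
    (A + 1) * (s ^ 2 - u ^ 2) + A * (s ^ 2 - v ^ 2) + 2 * A * (A + 1) * s * |u - v|
      ≤ (2 * A + 1) ^ 2 * s ^ 2 := by
  wlog huv : v ≤ u generalizing u v
  · have := this (u := -u) (v := -v) (by rwa [abs_neg]) (by rwa [abs_neg]) (by linarith)
    rwa [neg_sq, neg_sq, neg_sub_neg, abs_sub_comm] at this
  rw [abs_of_nonneg (sub_nonneg.2 huv)]
  obtain ⟨hsu, hus⟩ := abs_le.mp hu
  obtain ⟨hsv, -⟩ := abs_le.mp hv
  have hvs : 0 ≤ A * ((v + s) * (v + (2 * A + 1) * s)) := by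
    apply mul_nonneg hA; apply mul_nonneg <;> nlinarith
  rcases le_total A 1 with hA1 | hA1
  · nlinarith [mul_nonneg (by linarith : (0:ℝ) ≤ A + 1) (sq_nonneg (u - A * s)),
      mul_nonneg (mul_nonneg hA (sq_nonneg s)) (by nlinarith : (0:ℝ) ≤ 1 + A - A ^ 2)]
  · nlinarith [mul_nonneg (by linarith : (0:ℝ) ≤ A + 1)
      (mul_nonneg (by linarith : (0:ℝ) ≤ s - u) (by nlinarith : (0:ℝ) ≤ (2 * A - 1) * s - u))]

theorem abs_qCov_combination_le {q A s t : ℝ} (hq0 : 0 ≤ q) (hq1 : q < 1) (hA : 0 ≤ A)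
    {x y x' y' : ℕ →ᵇ ℝ} (hx : ∀ n, |x n| ≤ s) (hy : ∀ n, |y n| ≤ t)
    (hx' : ∀ n, |x' n| ≤ s) (hy' : ∀ n, |y' n| ≤ t) :
    |(A + 1) * qCov q x y - A * qCov q x' y' -
        A * (A + 1) * (qMean q x - qMean q x') * (qMean q y - qMean q y')|
      ≤ s * t * (2 * A + 1) ^ 2 := by
  have hs : 0 ≤ s := (abs_nonneg _).trans (hx 0)
  have ht : 0 ≤ t := (abs_nonneg _).trans (hy 0)
  rcases hs.eq_or_lt with rfl | hs
  · obtain rfl : x = 0 := by ext n; exact abs_nonpos_iff.mp (hx n)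
    obtain rfl : x' = 0 := by ext n; exact abs_nonpos_iff.mp (hx' n)
    simp [qCov, qMean]
  have hU : |qMean q y - qMean q y'| ≤ 2 * t := by
    have := abs_sub (qMean q y) (qMean q y')
    linarith [abs_qMean_le hq0 hq1 hy, abs_qMean_le hq0 hq1 hy']
  refine le_of_mul_le_mul_left ?_ hs
  calc s * |(A + 1) * qCov q x y - A * qCov q x' y' -
          A * (A + 1) * (qMean q x - qMean q x') * (qMean q y - qMean q y')|
      ≤ s * ((A + 1) * |qCov q x y| + A * |qCov q x' y'| +
          A * (A + 1) * |qMean q x - qMean q x'| * |qMean q y - qMean q y'|) := by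
        gcongr
        refine (abs_sub _ _).trans (add_le_add (abs_sub _ _) le_rfl) |>.trans_eq ?_
        simp only [abs_mul, abs_of_nonneg hA, abs_of_nonneg (by linarith : 0 ≤ A + 1)]
    _ ≤ (A + 1) * (t * (s ^ 2 - qMean q x ^ 2)) + A * (t * (s ^ 2 - qMean q x' ^ 2)) +
          A * (A + 1) * s * |qMean q x - qMean q x'| * (2 * t) := by
        have := mul_abs_qCov_le hq0 hq1 hx hy
        have := mul_abs_qCov_le hq0 hq1 hx' hy'
        have : 0 ≤ A * (A + 1) * s * |qMean q x - qMean q x'| := by positivity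
        nlinarith
    _ = t * ((A + 1) * (s ^ 2 - qMean q x ^ 2) + A * (s ^ 2 - qMean q x' ^ 2) +
          2 * A * (A + 1) * s * |qMean q x - qMean q x'|) := by ring
    _ ≤ t * ((2 * A + 1) ^ 2 * s ^ 2) := by
        gcongr
        exact add_one_mul_sq_sub_sq_add_le hA (abs_qMean_le hq0 hq1 hx) (abs_qMean_le hq0 hq1 hx')
    _ = s * (s * t * (2 * A + 1) ^ 2) := by ring

theorem exists_coe_eq_of_forall_mem_Icc {x : ℕ → ℝ} {m M : ℝ} (hx : ∀ n, x n ∈ Icc m M) :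
    ∃ X : ℕ →ᵇ ℝ, ⇑X = x :=
  ⟨ofNormedAddCommGroupDiscrete x (max |m| |M|) fun n => abs_le_max_abs_abs (hx n).1 (hx n).2, rfl⟩

theorem abs_sub_midpoint_le {x m M : ℝ} (hx : x ∈ Icc m M) : |x - (m + M) / 2| ≤ (M - m) / 2 :=
  abs_le.mpr ⟨by linarith [hx.1], by linarith [hx.2]⟩

theorem abs_qGruss_le {q A m M φ Φ : ℝ} (hq0 : 0 ≤ q) (hq1 : q < 1) (hA : 0 ≤ A)
    {x y x' y' : ℕ → ℝ} (hx : ∀ n, x n ∈ Icc m M) (hy : ∀ n, y n ∈ Icc φ Φ)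
    (hx' : ∀ n, x' n ∈ Icc m M) (hy' : ∀ n, y' n ∈ Icc φ Φ) :
    |(A + 1) * qMean q (x * y) - A * qMean q (x' * y') -
        ((A + 1) * qMean q x - A * qMean q x') * ((A + 1) * qMean q y - A * qMean q y')|
      ≤ (M - m) * (Φ - φ) / 4 * (2 * A + 1) ^ 2 := by
  obtain ⟨X, rfl⟩ := exists_coe_eq_of_forall_mem_Icc hx
  obtain ⟨Y, rfl⟩ := exists_coe_eq_of_forall_mem_Icc hy
  obtain ⟨X', rfl⟩ := exists_coe_eq_of_forall_mem_Icc hx'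
  obtain ⟨Y', rfl⟩ := exists_coe_eq_of_forall_mem_Icc hy'
  have key := abs_qCov_combination_le hq0 hq1 hA
    (x := X - const ℕ ((m + M) / 2)) (y := Y - const ℕ ((φ + Φ) / 2))
    (x' := X' - const ℕ ((m + M) / 2)) (y' := Y' - const ℕ ((φ + Φ) / 2))
    (fun n => abs_sub_midpoint_le (hx n)) (fun n => abs_sub_midpoint_le (hy n))
    (fun n => abs_sub_midpoint_le (hx' n)) (fun n => abs_sub_midpoint_le (hy' n))
  simp only [qCov_sub_const hq0 hq1, qMean_sub hq0 hq1, qMean_const hq0 hq1] at key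
  convert key using 2
  · rw [qCov, qCov]
    ring
  · ring

/-- q-Grüss-type inequality for `I_q(·;a,b)` with the extra factor
`1 + 4ab/(b−a)²`. -/
theorem q_gruss_Iqab (q a b m M φ Φ : ℝ) (f g : ℝ → ℝ)
    (hq0 : 0 < q) (hq1 : q < 1) (ha : 0 < a) (hab : a < b)
    (hf : ∀ x ∈ Icc (0:ℝ) b, m ≤ f x ∧ f x ≤ M)
    (hg : ∀ x ∈ Icc (0:ℝ) b, φ ≤ g x ∧ g x ≤ Φ) :
    |(1 / (b - a)) *
          ((b * (1 - q) * ∑' n : ℕ, f (b * q ^ n) * g (b * q ^ n) * q ^ n) -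
            (a * (1 - q) * ∑' n : ℕ, f (a * q ^ n) * g (a * q ^ n) * q ^ n)) -
        (1 / (b - a) ^ 2) *
          ((b * (1 - q) * ∑' n : ℕ, f (b * q ^ n) * q ^ n) -
            (a * (1 - q) * ∑' n : ℕ, f (a * q ^ n) * q ^ n)) *
          ((b * (1 - q) * ∑' n : ℕ, g (b * q ^ n) * q ^ n) -
            (a * (1 - q) * ∑' n : ℕ, g (a * q ^ n) * q ^ n))| ≤
      (1 / 4) * (M - m) * (Φ - φ) * (1 + 4 * a * b / (b - a) ^ 2) := by
  have hba : 0 < b - a := sub_pos.2 hab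
  have hb : 0 ≤ b := (ha.trans hab).le
  have hmem : ∀ c, 0 ≤ c → c ≤ b → ∀ n : ℕ, c * q ^ n ∈ Icc 0 b := fun c hc hcb n =>
    ⟨by positivity, (mul_le_of_le_one_right hc (pow_le_one₀ hq0.le hq1.le)).trans hcb⟩
  have key := abs_qGruss_le hq0.le hq1 (div_pos ha hba).le
    (x := fun n => f (b * q ^ n)) (y := fun n => g (b * q ^ n))
    (x' := fun n => f (a * q ^ n)) (y' := fun n => g (a * q ^ n))
    (fun n => hf _ (hmem b hb le_rfl n)) (fun n => hg _ (hmem b hb le_rfl n))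
    (fun n => hf _ (hmem a ha.le hab.le n)) (fun n => hg _ (hmem a ha.le hab.le n))
  have hrhs : (1 / 4) * (M - m) * (Φ - φ) * (1 + 4 * a * b / (b - a) ^ 2)
      = (M - m) * (Φ - φ) / 4 * (2 * (a / (b - a)) + 1) ^ 2 := by
    field_simp
    ring
  rw [hrhs]
  convert key using 2
  simp only [qMean, Pi.mul_apply]
  field_simp
  ring
end

section
/- Let 0 < q < 1, b > 0, and f : [0,b] → ℝ continuous and convex. Then f(b/(1+q)) ≤ (1/b)·I_q(f;0,b) ≤ (1/(1+q))·(q·f(0) + f(b)). -/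
/-!
The normalised Jackson integral `(1/b) I_q(f;0,b) = ∑ (1-q) qⁿ f(b qⁿ)` is the mean of `f` for the
probability weights `(1-q) qⁿ` at the nodes `b qⁿ ∈ [0,b]`, whose barycentre is `b/(1+q)`.
Averaging a supporting line of `f` at the barycentre gives the lower bound (Jensen); averaging the
chord of `f` over `[0,b]` gives the upper bound. The same two affine bounds sandwich the terms of
the series, which makes it summable.
-/

open Set

namespace ConvexOn

variable {S : Set ℝ} {f : ℝ → ℝ} {a b c x : ℝ}

theorem add_rightDeriv_mul_sub_le (hf : ConvexOn ℝ S f) (hc : c ∈ interior S) (hx : x ∈ S) :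
    f c + derivWithin f (Ioi c) c * (x - c) ≤ f x := by
  rcases lt_trichotomy x c with hxc | rfl | hcx
  · have hslope : slope f x c ≤ derivWithin f (Ioi c) c :=
      (hf.slope_le_leftDeriv_of_mem_interior hx hc hxc).trans
        (hf.leftDeriv_le_rightDeriv_of_mem_interior hc)
    rw [slope_def_field, div_le_iff₀ (sub_pos.2 hxc)] at hslope
    linarith
  · simp
  · have hslope := hf.rightDeriv_le_slope_of_mem_interior hc hx hcx
    rw [slope_def_field, le_div_iff₀ (sub_pos.2 hcx)] at hslope
    linarith

theorem le_add_slope_mul_sub (hf : ConvexOn ℝ (Icc a b) f) (hx : x ∈ Icc a b) :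
    f x ≤ f a + slope f a b * (x - a) := by
  rcases hx.1.eq_or_lt with rfl | hax
  · simp
  have hslope : slope f a x ≤ slope f a b :=
    hf.slope_mono (left_mem_Icc.2 (hx.1.trans hx.2)) ⟨hx, hax.ne'⟩
      ⟨right_mem_Icc.2 (hx.1.trans hx.2), (hax.trans_le hx.2).ne'⟩ hx.2
  rw [slope_def_field f a x, div_le_iff₀ (sub_pos.2 hax)] at hslope
  linarith

end ConvexOn

theorem Summable.of_le_of_le {ι : Type*} {f g h : ι → ℝ} (hgf : ∀ i, g i ≤ f i)
    (hfh : ∀ i, f i ≤ h i) (hg : Summable g) (hh : Summable h) : Summable f := by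
  have hdiff : Summable fun i ↦ f i - g i :=
    (hh.sub hg).of_nonneg_of_le (fun i ↦ sub_nonneg.2 (hgf i)) fun i ↦ sub_le_sub_right (hfh i) _
  simpa using hdiff.add hg

section WeightedMean

variable {ι : Type*} {w x : ι → ℝ} {m : ℝ}

theorem HasSum.mul_affine (hw : HasSum w 1) (hm : HasSum (fun i ↦ w i * x i) m) (α β c : ℝ) :
    HasSum (fun i ↦ w i * (α + β * (x i - c))) (α + β * (m - c)) := by
  have hsplit : (fun i ↦ w i * (α + β * (x i - c))) =
      fun i ↦ (α - β * c) * w i + β * (w i * x i) := by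
    funext i
    ring
  rw [hsplit, show α + β * (m - c) = (α - β * c) * 1 + β * m by ring]
  exact (hw.mul_left _).add (hm.mul_left β)

variable {S : Set ℝ} {f : ℝ → ℝ} {a b : ℝ}

theorem ConvexOn.map_le_tsum_mul (hf : ConvexOn ℝ S f) (hx : ∀ i, x i ∈ S) (hmS : m ∈ interior S)
    (hw0 : ∀ i, 0 ≤ w i) (hw : HasSum w 1) (hm : HasSum (fun i ↦ w i * x i) m)
    (hfx : Summable fun i ↦ w i * f (x i)) :
    f m ≤ ∑' i, w i * f (x i) := by
  have hline := hw.mul_affine hm (f m) (derivWithin f (Ioi m) m) m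
  rw [sub_self, mul_zero, add_zero] at hline
  exact hasSum_le (fun i ↦ mul_le_mul_of_nonneg_left
    (hf.add_rightDeriv_mul_sub_le hmS (hx i)) (hw0 i)) hline hfx.hasSum

theorem ConvexOn.tsum_mul_le_add_slope_mul (hf : ConvexOn ℝ (Icc a b) f) (hx : ∀ i, x i ∈ Icc a b)
    (hw0 : ∀ i, 0 ≤ w i) (hw : HasSum w 1) (hm : HasSum (fun i ↦ w i * x i) m)
    (hfx : Summable fun i ↦ w i * f (x i)) :
    ∑' i, w i * f (x i) ≤ f a + slope f a b * (m - a) :=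
  hasSum_le (fun i ↦ mul_le_mul_of_nonneg_left (hf.le_add_slope_mul_sub (hx i)) (hw0 i))
    hfx.hasSum (hw.mul_affine hm _ _ a)

theorem ConvexOn.summable_mul_comp (hf : ConvexOn ℝ (Icc a b) f) (hab : a < b)
    (hx : ∀ i, x i ∈ Icc a b) (hw0 : ∀ i, 0 ≤ w i) (hw : HasSum w 1)
    (hm : HasSum (fun i ↦ w i * x i) m) :
    Summable fun i ↦ w i * f (x i) := by
  have hc : (a + b) / 2 ∈ interior (Icc a b) := by
    rw [interior_Icc]; constructor <;> linarith
  exact Summable.of_le_of_le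
    (fun i ↦ mul_le_mul_of_nonneg_left (hf.add_rightDeriv_mul_sub_le hc (hx i)) (hw0 i))
    (fun i ↦ mul_le_mul_of_nonneg_left (hf.le_add_slope_mul_sub (hx i)) (hw0 i))
    (hw.mul_affine hm _ _ _).summable (hw.mul_affine hm _ _ _).summable

end WeightedMean

section JacksonWeights

variable {q : ℝ}

theorem hasSum_one_sub_mul_pow (hq0 : 0 ≤ q) (hq1 : q < 1) :
    HasSum (fun n : ℕ ↦ (1 - q) * q ^ n) 1 := by
  have := (hasSum_geometric_of_lt_one hq0 hq1).mul_left (1 - q)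
  rwa [mul_inv_cancel₀ (sub_ne_zero.2 hq1.ne')] at this

theorem hasSum_one_sub_mul_pow_mul_mul_pow (hq0 : 0 ≤ q) (hq1 : q < 1) (b : ℝ) :
    HasSum (fun n : ℕ ↦ (1 - q) * q ^ n * (b * q ^ n)) (b / (1 + q)) := by
  have hq2 : q ^ 2 < 1 := by nlinarith
  have hsplit : (fun n : ℕ ↦ (1 - q) * q ^ n * (b * q ^ n)) =
      fun n ↦ (1 - q) * b * (q ^ 2) ^ n := by
    funext n
    ring
  have hvalue : b / (1 + q) = (1 - q) * b * (1 - q ^ 2)⁻¹ := by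
    rw [show 1 - q ^ 2 = (1 - q) * (1 + q) by ring]
    field_simp [sub_ne_zero.2 hq1.ne']
  rw [hsplit, hvalue]
  exact (hasSum_geometric_of_lt_one (sq_nonneg q) hq2).mul_left _

end JacksonWeights

theorem q_hermite_hadamard_Iq_general (q b : ℝ) (f : ℝ → ℝ)
    (hq0 : 0 < q) (hq1 : q < 1) (hb : 0 < b)
    (hconv : ConvexOn ℝ (Icc 0 b) f) :
    f (b / (1 + q)) ≤ (1 / b) * (b * (1 - q) * ∑' n : ℕ, f (b * q ^ n) * q ^ n) ∧
      (1 / b) * (b * (1 - q) * ∑' n : ℕ, f (b * q ^ n) * q ^ n) ≤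
        (1 / (1 + q)) * (q * f 0 + f b) := by
  have hw0 (n : ℕ) : 0 ≤ (1 - q) * q ^ n := mul_nonneg (sub_nonneg.2 hq1.le) (pow_nonneg hq0.le n)
  have hx (n : ℕ) : b * q ^ n ∈ Icc 0 b :=
    ⟨by positivity, mul_le_of_le_one_right hb.le (pow_le_one₀ hq0.le hq1.le)⟩
  have hw := hasSum_one_sub_mul_pow hq0.le hq1
  have hm := hasSum_one_sub_mul_pow_mul_mul_pow hq0.le hq1 b
  have hmean : (1 / b) * (b * (1 - q) * ∑' n : ℕ, f (b * q ^ n) * q ^ n) =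
      ∑' n : ℕ, (1 - q) * q ^ n * f (b * q ^ n) := by
    rw [one_div, ← mul_assoc, ← mul_assoc, inv_mul_cancel₀ hb.ne', one_mul, ← tsum_mul_left]
    congr 1 with n
    ring
  have hsum := hconv.summable_mul_comp hb hx hw0 hw hm
  rw [hmean]
  refine ⟨hconv.map_le_tsum_mul hx ?_ hw0 hw hm hsum,
    (hconv.tsum_mul_le_add_slope_mul hx hw0 hw hm hsum).trans_eq ?_⟩
  · rw [interior_Icc]
    exact ⟨by positivity, div_lt_self hb (by linarith)⟩
  · rw [slope_def_field, sub_zero, sub_zero]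
    field_simp
    ring

/-- q-Hermite–Hadamard inequality for the Jackson q-integral on `[0,b]`. -/
theorem q_hermite_hadamard_Iq (q b : ℝ) (f : ℝ → ℝ)
    (hq0 : 0 < q) (hq1 : q < 1) (hb : 0 < b)
    (hcont : ContinuousOn f (Icc 0 b)) (hconv : ConvexOn ℝ (Icc 0 b) f) :
    f (b / (1 + q)) ≤ (1 / b) * (b * (1 - q) * ∑' n : ℕ, f (b * q ^ n) * q ^ n) ∧
      (1 / b) * (b * (1 - q) * ∑' n : ℕ, f (b * q ^ n) * q ^ n) ≤
        (1 / (1 + q)) * (q * f 0 + f b) :=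
  q_hermite_hadamard_Iq_general q b f hq0 hq1 hb hconv
end

section
/- Let 0 < q < 1, b > 0, n ∈ ℕ⁺, a = b q^n, and let f, g : [a,b] → ℝ with α, β > 1 satisfying 1/α + 1/β = 1. Then (1/α)·G_q(|f|^α;a,b) + (1/β)·G_q(|g|^β;a,b) ≥ (1/(b−a))·G_q(|f|;a,b)·G_q(|g|;a,b), where G_q(h;a,b) = b(1−q)∑_{k=0}^{n−1} h(b q^k) q^k. -/
/-!
With weights `w_k = q^k` and total weight `S = ∑ w_k`, one has `b - a = b(1 - q) S`, so the
claim is Young's inequality for weighted means: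
`(∑ w|f|)(∑ w|g|)/S ≤ (∑ w|f|^α)/α + (∑ w|g|^β)/β`.
By Hölder, `∑ w|f| ≤ S^(1-1/α) (∑ w|f|^α)^(1/α)`, and likewise for `g` and `β`; the
powers of `S` multiply to `S`, and Young's inequality `x^(1/α) y^(1/β) ≤ x/α + y/β`
finishes.
-/

open Finset

theorem Real.sum_mul_sum_div_sum_le_young {ι : Type*} (s : Finset ι) {p r : ℝ}
    (hpr : p.HolderConjugate r) {w f g : ι → ℝ} (hw : ∀ i, 0 ≤ w i) (hf : ∀ i, 0 ≤ f i)
    (hg : ∀ i, 0 ≤ g i) :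
    (∑ i ∈ s, f i * w i) * (∑ i ∈ s, g i * w i) / ∑ i ∈ s, w i ≤
      (∑ i ∈ s, f i ^ p * w i) / p + (∑ i ∈ s, g i ^ r * w i) / r := by
  set S := ∑ i ∈ s, w i
  set A := ∑ i ∈ s, f i ^ p * w i
  set B := ∑ i ∈ s, g i ^ r * w i
  have hS : 0 ≤ S := sum_nonneg fun i _ ↦ hw i
  have hA : 0 ≤ A := sum_nonneg fun i _ ↦ mul_nonneg (rpow_nonneg (hf i) p) (hw i)
  have hB : 0 ≤ B := sum_nonneg fun i _ ↦ mul_nonneg (rpow_nonneg (hg i) r) (hw i)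
  have holder_f : ∑ i ∈ s, f i * w i ≤ S ^ (1 - p⁻¹) * A ^ p⁻¹ := by
    simpa only [mul_comm (w _)] using inner_le_weight_mul_Lp_of_nonneg s hpr.lt.le w f hw hf
  have holder_g : ∑ i ∈ s, g i * w i ≤ S ^ (1 - r⁻¹) * B ^ r⁻¹ := by
    simpa only [mul_comm (w _)] using
      inner_le_weight_mul_Lp_of_nonneg s hpr.symm.lt.le w g hw hg
  have young : A ^ p⁻¹ * B ^ r⁻¹ ≤ A / p + B / r := by
    simpa only [inv_mul_eq_div] using geom_mean_le_arith_mean2_weighted hpr.inv_nonneg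
      hpr.symm.inv_nonneg hA hB hpr.inv_add_inv_eq_one
  have power_S : S ^ (1 - p⁻¹) * S ^ (1 - r⁻¹) = S := by
    have hexp : 1 - p⁻¹ + (1 - r⁻¹) = 1 := by linarith [hpr.inv_add_inv_eq_one]
    rw [← rpow_add' hS (by rw [hexp]; exact one_ne_zero), hexp, rpow_one]
  refine div_le_of_le_mul₀ hS
    (add_nonneg (div_nonneg hA hpr.nonneg) (div_nonneg hB hpr.symm.nonneg)) ?_
  calc (∑ i ∈ s, f i * w i) * (∑ i ∈ s, g i * w i)
      ≤ (S ^ (1 - p⁻¹) * A ^ p⁻¹) * (S ^ (1 - r⁻¹) * B ^ r⁻¹) :=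
        mul_le_mul holder_f holder_g (sum_nonneg fun i _ ↦ mul_nonneg (hg i) (hw i))
          (by positivity)
    _ = (S ^ (1 - p⁻¹) * S ^ (1 - r⁻¹)) * (A ^ p⁻¹ * B ^ r⁻¹) := by ring
    _ = S * (A ^ p⁻¹ * B ^ r⁻¹) := by rw [power_S]
    _ ≤ (A / p + B / r) * S := by rw [mul_comm _ S]; exact mul_le_mul_of_nonneg_left young hS

theorem q_young_Gq_general (q b α β : ℝ) (n : ℕ) (f g : ℝ → ℝ) (a : ℝ)
    (hq0 : 0 < q) (hq1 : q < 1) (hb : 0 < b) (ha : a = b * q ^ n)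
    (hα : 1 < α) (hαβ : 1 / α + 1 / β = 1) :
    (1 / α) * (b * (1 - q) * ∑ k ∈ Finset.range n, |f (b * q ^ k)| ^ α * q ^ k) +
        (1 / β) * (b * (1 - q) * ∑ k ∈ Finset.range n, |g (b * q ^ k)| ^ β * q ^ k) ≥
      (1 / (b - a)) * (b * (1 - q) * ∑ k ∈ Finset.range n, |f (b * q ^ k)| * q ^ k) *
        (b * (1 - q) * ∑ k ∈ Finset.range n, |g (b * q ^ k)| * q ^ k) := by
  have hconj : α.HolderConjugate β :=
    Real.holderConjugate_iff.mpr ⟨hα, by simpa only [one_div] using hαβ⟩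
  have hc : 0 < b * (1 - q) := mul_pos hb (sub_pos.mpr hq1)
  have young := Real.sum_mul_sum_div_sum_le_young (range n) hconj (w := (q ^ ·))
    (fun k ↦ pow_nonneg hq0.le k) (fun k ↦ abs_nonneg (f (b * q ^ k)))
    (fun k ↦ abs_nonneg (g (b * q ^ k)))
  have hba : b - a = b * (1 - q) * ∑ k ∈ range n, q ^ k := by
    rw [ha, mul_assoc, mul_neg_geom_sum]; ring
  rw [ge_iff_le, hba]
  calc _ = b * (1 - q) * ((∑ k ∈ range n, |f (b * q ^ k)| * q ^ k) *
          (∑ k ∈ range n, |g (b * q ^ k)| * q ^ k) / ∑ k ∈ range n, q ^ k) := by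
        field_simp
    _ ≤ _ := mul_le_mul_of_nonneg_left young hc.le
    _ = _ := by ring

/-- Young-type inequality for the restricted q-integral:
`(1/α)G_q(|f|^α) + (1/β)G_q(|g|^β) ≥ (1/(b−a))·G_q(|f|)·G_q(|g|)` with `a = bqⁿ`. -/
theorem q_young_Gq (q b α β : ℝ) (n : ℕ) (f g : ℝ → ℝ) (a : ℝ)
    (hq0 : 0 < q) (hq1 : q < 1) (hb : 0 < b) (hn : 0 < n) (ha : a = b * q ^ n)
    (hα : 1 < α) (hβ : 1 < β) (hαβ : 1 / α + 1 / β = 1) :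
    (1 / α) * (b * (1 - q) * ∑ k ∈ Finset.range n, |f (b * q ^ k)| ^ α * q ^ k) +
        (1 / β) * (b * (1 - q) * ∑ k ∈ Finset.range n, |g (b * q ^ k)| ^ β * q ^ k) ≥
      (1 / (b - a)) * (b * (1 - q) * ∑ k ∈ Finset.range n, |f (b * q ^ k)| * q ^ k) *
        (b * (1 - q) * ∑ k ∈ Finset.range n, |g (b * q ^ k)| * q ^ k) :=
  q_young_Gq_general q b α β n f g a hq0 hq1 hb ha hα hαβ
end

section
/- Let 0 < q < 1, b > 0, n ∈ ℕ⁺, a = b q^n, and let f, g : [a,b] → (0,∞) be positive functions with m = min_{x} f(x)/g(x) and M = max_x f(x)/g(x) over the points x = b q^k, k = 0,…,n−1. Then G_q(f²;a,b)·G_q(g²;a,b) ≤ ((m+M)²/(4mM))·(G_q(fg;a,b))², where G_q(h;a,b) = b(1−q)∑_{k=0}^{n−1} h(b q^k) q^k. -/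
open scoped BigOperators

/-- Cassels-type inequality for the restricted q-integral. -/
theorem q_cassels_Gq (q b m M : ℝ) (n : ℕ) (f g : ℝ → ℝ) (a : ℝ)
    (hq0 : 0 < q) (hq1 : q < 1) (hb : 0 < b) (hn : 0 < n) (ha : a = b * q ^ n)
    (hfpos : ∀ k < n, 0 < f (b * q ^ k)) (hgpos : ∀ k < n, 0 < g (b * q ^ k))
    (hm : 0 < m) (hM : 0 < M)
    (hbound : ∀ k < n, m ≤ f (b * q ^ k) / g (b * q ^ k) ∧ f (b * q ^ k) / g (b * q ^ k) ≤ M)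
    (hmin : ∃ k < n, f (b * q ^ k) / g (b * q ^ k) = m)
    (hmax : ∃ k < n, f (b * q ^ k) / g (b * q ^ k) = M) :
    (b * (1 - q) * ∑ k ∈ Finset.range n, f (b * q ^ k) ^ 2 * q ^ k) *
        (b * (1 - q) * ∑ k ∈ Finset.range n, g (b * q ^ k) ^ 2 * q ^ k) ≤
      ((m + M) ^ 2 / (4 * m * M)) *
        (b * (1 - q) * ∑ k ∈ Finset.range n, f (b * q ^ k) * g (b * q ^ k) * q ^ k) ^ 2 := by
  set A := ∑ k ∈ Finset.range n, f (b * q ^ k) ^ 2 * q ^ k with hA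
  set B := ∑ k ∈ Finset.range n, g (b * q ^ k) ^ 2 * q ^ k with hB
  set C := ∑ k ∈ Finset.range n, f (b * q ^ k) * g (b * q ^ k) * q ^ k with hC
  have hqk : ∀ k : ℕ, (0:ℝ) ≤ q ^ k := fun k => pow_nonneg hq0.le k
  have hAnn : 0 ≤ A := Finset.sum_nonneg fun k _ =>
    mul_nonneg (sq_nonneg _) (hqk k)
  have hBnn : 0 ≤ B := Finset.sum_nonneg fun k _ =>
    mul_nonneg (sq_nonneg _) (hqk k)
  have hCnn : 0 ≤ C := Finset.sum_nonneg fun k hk => by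
    have hk' := Finset.mem_range.mp hk
    exact mul_nonneg (mul_nonneg (hfpos k hk').le (hgpos k hk').le) (hqk k)
  have hkey : A + m * M * B ≤ (m + M) * C := by
    have : ∀ k ∈ Finset.range n,
        f (b * q ^ k) ^ 2 * q ^ k + m * M * (g (b * q ^ k) ^ 2 * q ^ k) ≤
        (m + M) * (f (b * q ^ k) * g (b * q ^ k) * q ^ k) := by
      intro k hk
      have hk' := Finset.mem_range.mp hk
      have hg := hgpos k hk'
      obtain ⟨h1, h2⟩ := hbound k hk'
      have h1' : m * g (b * q ^ k) ≤ f (b * q ^ k) := by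
        rw [le_div_iff₀ hg] at h1; linarith
      have h2' : f (b * q ^ k) ≤ M * g (b * q ^ k) := by
        rw [div_le_iff₀ hg] at h2; linarith
      have hprod : 0 ≤ (M * g (b * q ^ k) - f (b * q ^ k)) *
          (f (b * q ^ k) - m * g (b * q ^ k)) :=
        mul_nonneg (by linarith) (by linarith)
      nlinarith [hqk k, mul_nonneg hprod (hqk k)]
    calc A + m * M * B = ∑ k ∈ Finset.range n,
          (f (b * q ^ k) ^ 2 * q ^ k + m * M * (g (b * q ^ k) ^ 2 * q ^ k)) := by
            rw [Finset.sum_add_distrib, Finset.mul_sum]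
      _ ≤ ∑ k ∈ Finset.range n, (m + M) * (f (b * q ^ k) * g (b * q ^ k) * q ^ k) :=
          Finset.sum_le_sum this
      _ = (m + M) * C := (Finset.mul_sum _ _ _).symm
  have hmain : 4 * m * M * (A * B) ≤ (m + M) ^ 2 * C ^ 2 := by
    nlinarith [sq_nonneg (A - m * M * B), sq_nonneg (A + m * M * B),
      mul_pos hm hM, mul_nonneg hCnn hCnn,
      mul_self_le_mul_self (by positivity : (0:ℝ) ≤ A + m * M * B) hkey]
  have hbq : (0:ℝ) < b * (1 - q) := mul_pos hb (by linarith)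
  have hmM : (0:ℝ) < 4 * m * M := by positivity
  rw [div_mul_eq_mul_div, ge_iff_le.symm, ge_iff_le, le_div_iff₀ hmM]
  nlinarith [mul_le_mul_of_nonneg_left hmain (mul_pos hbq hbq).le,
    sq_nonneg (b * (1 - q)), mul_pos hbq hbq]
end

section
/- Let 0 < q < 1, b > 0, n ∈ ℕ⁺, a = b q^n, f, g : [a,b] → (0,∞) positive, and p ≥ 1 or p < 0. Then (G_q(fg;a,b))^p ≤ (G_q(f²;a,b))^{p−1}·G_q(f^{2−p}g^p;a,b), where G_q(h;a,b) = b(1−q)∑_{k=0}^{n−1} h(b q^k) q^k; for 0 < p < 1 the reverse inequality holds. -/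
/-!
With weights `w k = b (1 - q) f(b q^k)² q^k` and points `x k = g(b q^k) / f(b q^k)` the three
q-integrals are `∑ w`, `∑ w x` and `∑ w x^p`. Jensen's inequality for `t ↦ t^p` on `(0, ∞)`
(convex for `p ≥ 1` or `p < 0`, concave for `0 < p < 1`) at the centre of mass of the `x k`,
multiplied through by `(∑ w)^p`, gives both inequalities.
-/

open Set Real Finset

lemma convexOn_rpow_of_neg {p : ℝ} (hp : p < 0) : ConvexOn ℝ (Ioi 0) fun x : ℝ ↦ x ^ p := by
  refine MonotoneOn.convexOn_of_deriv (convex_Ioi 0)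
    (fun x hx ↦ (continuousAt_rpow_const x p (Or.inl (ne_of_gt hx))).continuousWithinAt) ?_ ?_
  · rw [interior_Ioi]
    exact fun x hx ↦
      (hasDerivAt_rpow_const (Or.inl (ne_of_gt hx))).differentiableAt.differentiableWithinAt
  · rw [interior_Ioi]
    intro x hx y _ hxy
    simp only [Real.deriv_rpow_const]
    exact mul_le_mul_of_nonpos_left (rpow_le_rpow_of_nonpos hx hxy (by linarith)) hp.le

lemma rpow_two_sub_mul_rpow {F G : ℝ} (hF : 0 < F) (hG : 0 ≤ G) (p : ℝ) :
    F ^ (2 - p) * G ^ p = F ^ 2 * (G / F) ^ p := by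
  have hFp : F ^ p ≠ 0 := (rpow_pos_of_pos hF p).ne'
  rw [div_rpow hG hF.le, rpow_sub hF, rpow_two]
  field_simp

section WeightedPowerMean

variable {ι : Type*} {s : Finset ι} {w x : ι → ℝ} {p : ℝ}

lemma rpow_sum_mul_eq_centerMass (hW : 0 < ∑ i ∈ s, w i) (hA : 0 ≤ ∑ i ∈ s, w i * x i) :
    (∑ i ∈ s, w i * x i) ^ p = (∑ i ∈ s, w i) ^ p * s.centerMass w x ^ p := by
  simp only [centerMass, smul_eq_mul]
  rw [← mul_rpow hW.le (mul_nonneg (inv_nonneg.2 hW.le) hA), mul_inv_cancel_left₀ hW.ne']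

lemma rpow_sub_one_mul_sum_eq_centerMass (hW : 0 < ∑ i ∈ s, w i) :
    (∑ i ∈ s, w i) ^ (p - 1) * ∑ i ∈ s, w i * x i ^ p =
      (∑ i ∈ s, w i) ^ p * s.centerMass w (fun i ↦ x i ^ p) := by
  rw [centerMass, rpow_sub_one hW.ne']
  simp only [smul_eq_mul]
  field_simp

lemma rpow_sum_mul_le_of_convexOn (hf : ConvexOn ℝ (Ioi 0) fun t : ℝ ↦ t ^ p)
    (hw : ∀ i ∈ s, 0 ≤ w i) (hW : 0 < ∑ i ∈ s, w i) (hx : ∀ i ∈ s, 0 < x i) :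
    (∑ i ∈ s, w i * x i) ^ p ≤ (∑ i ∈ s, w i) ^ (p - 1) * ∑ i ∈ s, w i * x i ^ p := by
  have hA : 0 ≤ ∑ i ∈ s, w i * x i :=
    sum_nonneg fun i hi ↦ mul_nonneg (hw i hi) (hx i hi).le
  rw [rpow_sum_mul_eq_centerMass hW hA, rpow_sub_one_mul_sum_eq_centerMass hW]
  exact mul_le_mul_of_nonneg_left (hf.map_centerMass_le hw hW hx) (rpow_nonneg hW.le p)

lemma rpow_sum_mul_ge_of_concaveOn (hf : ConcaveOn ℝ (Ioi 0) fun t : ℝ ↦ t ^ p)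
    (hw : ∀ i ∈ s, 0 ≤ w i) (hW : 0 < ∑ i ∈ s, w i) (hx : ∀ i ∈ s, 0 < x i) :
    (∑ i ∈ s, w i) ^ (p - 1) * ∑ i ∈ s, w i * x i ^ p ≤ (∑ i ∈ s, w i * x i) ^ p := by
  have hA : 0 ≤ ∑ i ∈ s, w i * x i :=
    sum_nonneg fun i hi ↦ mul_nonneg (hw i hi) (hx i hi).le
  rw [rpow_sum_mul_eq_centerMass hW hA, rpow_sub_one_mul_sum_eq_centerMass hW]
  exact mul_le_mul_of_nonneg_left (hf.le_map_centerMass hw hW hx) (rpow_nonneg hW.le p)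

end WeightedPowerMean

theorem q_jensen_power_Gq_general (q b p : ℝ) (n : ℕ) (f g : ℝ → ℝ)
    (hq0 : 0 < q) (hq1 : q < 1) (hb : 0 < b) (hn : 0 < n)
    (hfpos : ∀ k < n, 0 < f (b * q ^ k)) (hgpos : ∀ k < n, 0 < g (b * q ^ k)) :
    ((1 ≤ p ∨ p < 0) →
      (b * (1 - q) * ∑ k ∈ Finset.range n, f (b * q ^ k) * g (b * q ^ k) * q ^ k) ^ p ≤
        (b * (1 - q) * ∑ k ∈ Finset.range n, f (b * q ^ k) ^ 2 * q ^ k) ^ (p - 1) *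
          (b * (1 - q) *
            ∑ k ∈ Finset.range n, f (b * q ^ k) ^ (2 - p) * g (b * q ^ k) ^ p * q ^ k)) ∧
    (0 < p → p < 1 →
      (b * (1 - q) * ∑ k ∈ Finset.range n, f (b * q ^ k) ^ 2 * q ^ k) ^ (p - 1) *
          (b * (1 - q) *
            ∑ k ∈ Finset.range n, f (b * q ^ k) ^ (2 - p) * g (b * q ^ k) ^ p * q ^ k) ≤
        (b * (1 - q) * ∑ k ∈ Finset.range n, f (b * q ^ k) * g (b * q ^ k) * q ^ k) ^ p) := by
  set w : ℕ → ℝ := fun k ↦ b * (1 - q) * f (b * q ^ k) ^ 2 * q ^ k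
  set x : ℕ → ℝ := fun k ↦ g (b * q ^ k) / f (b * q ^ k)
  have hc : 0 < b * (1 - q) := mul_pos hb (by linarith)
  have hw : ∀ k ∈ range n, 0 < w k := fun k hk ↦
    mul_pos (mul_pos hc (pow_pos (hfpos k (mem_range.1 hk)) 2)) (pow_pos hq0 k)
  have hx : ∀ k ∈ range n, 0 < x k := fun k hk ↦
    div_pos (hgpos k (mem_range.1 hk)) (hfpos k (mem_range.1 hk))
  have hW : 0 < ∑ k ∈ range n, w k := sum_pos hw (nonempty_range_iff.2 hn.ne')
  have hB : b * (1 - q) * ∑ k ∈ range n, f (b * q ^ k) ^ 2 * q ^ k = ∑ k ∈ range n, w k := by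
    rw [mul_sum]
    exact sum_congr rfl fun k _ ↦ by ring
  have hA : b * (1 - q) * ∑ k ∈ range n, f (b * q ^ k) * g (b * q ^ k) * q ^ k =
      ∑ k ∈ range n, w k * x k := by
    rw [mul_sum]
    refine sum_congr rfl fun k hk ↦ ?_
    have := (hfpos k (mem_range.1 hk)).ne'
    simp only [w, x]
    field_simp
  have hC : b * (1 - q) * ∑ k ∈ range n, f (b * q ^ k) ^ (2 - p) * g (b * q ^ k) ^ p * q ^ k =
      ∑ k ∈ range n, w k * x k ^ p := by
    rw [mul_sum]
    refine sum_congr rfl fun k hk ↦ ?_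
    rw [rpow_two_sub_mul_rpow (hfpos k (mem_range.1 hk)) (hgpos k (mem_range.1 hk)).le]
    ring
  rw [hA, hB, hC]
  have hw₀ : ∀ k ∈ range n, 0 ≤ w k := fun k hk ↦ (hw k hk).le
  refine ⟨fun hp ↦ rpow_sum_mul_le_of_convexOn ?_ hw₀ hW hx, fun hp₀ hp₁ ↦
    rpow_sum_mul_ge_of_concaveOn ((concaveOn_rpow hp₀.le hp₁.le).subset Ioi_subset_Ici_self
      (convex_Ioi 0)) hw₀ hW hx⟩
  rcases hp with hp | hp
  · exact (convexOn_rpow hp).subset Ioi_subset_Ici_self (convex_Ioi 0)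
  · exact convexOn_rpow_of_neg hp

/-- Jensen-type power inequality for the restricted q-integral:
for `p ≥ 1` or `p < 0`, `(G_q(fg))^p ≤ (G_q(f²))^{p−1}·G_q(f^{2−p}g^p)`,
with the reverse inequality for `0 < p < 1`. -/
theorem q_jensen_power_Gq (q b p : ℝ) (n : ℕ) (f g : ℝ → ℝ) (a : ℝ)
    (hq0 : 0 < q) (hq1 : q < 1) (hb : 0 < b) (hn : 0 < n) (ha : a = b * q ^ n)
    (hfpos : ∀ k < n, 0 < f (b * q ^ k)) (hgpos : ∀ k < n, 0 < g (b * q ^ k)) :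
    ((1 ≤ p ∨ p < 0) →
      (b * (1 - q) * ∑ k ∈ Finset.range n, f (b * q ^ k) * g (b * q ^ k) * q ^ k) ^ p ≤
        (b * (1 - q) * ∑ k ∈ Finset.range n, f (b * q ^ k) ^ 2 * q ^ k) ^ (p - 1) *
          (b * (1 - q) *
            ∑ k ∈ Finset.range n, f (b * q ^ k) ^ (2 - p) * g (b * q ^ k) ^ p * q ^ k)) ∧
    (0 < p → p < 1 →
      (b * (1 - q) * ∑ k ∈ Finset.range n, f (b * q ^ k) ^ 2 * q ^ k) ^ (p - 1) *
          (b * (1 - q) *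
            ∑ k ∈ Finset.range n, f (b * q ^ k) ^ (2 - p) * g (b * q ^ k) ^ p * q ^ k) ≤
        (b * (1 - q) * ∑ k ∈ Finset.range n, f (b * q ^ k) * g (b * q ^ k) * q ^ k) ^ p) :=
  q_jensen_power_Gq_general q b p n f g hq0 hq1 hb hn hfpos hgpos
end
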